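/- arXiv:2106.15819 — 5 statements merged into one kernel-verified Lean document; each statement's English description precedes it below -/
import Mathlib

section
/- For any positive definite matrices A, B of the same dimension and any complex number z, the operator norm of A^z - B^z is at most |z| · M^{1+|Re(z)|} · ‖A - B‖, where M is the maximum of the operator norms of A, A^{-1}, B, B^{-1}. -/
open scoped Matrix.Norms.L2Operator ComplexOrder

/-- Complex power of a matrix via the functional calculus (junk value `0` for
non-Hermitian matrices). -/
noncomputable def Matrix.cpow {n : Type*} [Fintype n] [DecidableEq n]
    (A : Matrix n n ℂ) (z : ℂ) : Matrix n n ℂ :=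
  if hA : A.IsHermitian then
    (hA.eigenvectorUnitary : Matrix n n ℂ) *
      Matrix.diagonal (fun i => (hA.eigenvalues i : ℂ) ^ z) *
      (star (hA.eigenvectorUnitary : Matrix n n ℂ))
  else 0

/-!
Diagonalize `A = U diag(a) U*` and `B = V diag(b) V*`. With `K = U* V`, the matrices
`U* (A^z - B^z) V` and `U* (A - B) V` are the Hadamard products of `K` with `(a_i^z - b_j^z)` and
`(a_i - b_j)`, so by unitary invariance only these two have to be compared. The divided difference
factors through

  `x^z - y^z = z (log x - log y) ∫₀¹ x^(sz) y^((1-s)z) ds`,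
  `log x - log y = (x - y) ∫₀¹ (1 + r(x-1))⁻¹ (1 + r(y-1))⁻¹ dr`,

whose integrands are products of a function of `x` and a function of `y`. Hadamard multiplication
by `f(a_i) g(b_j)` is `X ↦ diag(f ∘ a) X diag(g ∘ b)`, of norm at most `‖f ∘ a‖∞ ‖X‖ ‖g ∘ b‖∞`.
The eigenvalues lie in `[M⁻¹, M]`, so the first integrand contributes `M^|Re z|` and the second
`∫₀¹ (1 + r(M⁻¹ - 1))⁻² dr = M`.
-/

open Set intervalIntegral Matrix

theorem mul_integral_cexp_mul (c : ℂ) :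
    c * ∫ s in (0 : ℝ)..1, Complex.exp (c * s) = Complex.exp c - 1 := by
  rcases eq_or_ne c 0 with rfl | hc
  · simp
  · rw [integral_exp_mul_complex hc]
    field_simp
    simp

theorem ofReal_cpow_eq_exp {t : ℝ} (ht : 0 < t) (w : ℂ) :
    (t : ℂ) ^ w = Complex.exp (Real.log t * w) := by
  rw [Complex.cpow_def_of_ne_zero (by exact_mod_cast ht.ne'), Complex.ofReal_log ht.le]

theorem ofReal_cpow_sub_ofReal_cpow_eq_integral {x y : ℝ} (hx : 0 < x) (hy : 0 < y) (z : ℂ) :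
    (x : ℂ) ^ z - (y : ℂ) ^ z = z * (Real.log x - Real.log y) *
      ∫ s in (0 : ℝ)..1, (x : ℂ) ^ (s * z) * (y : ℂ) ^ ((1 - s : ℝ) * z) := by
  set c : ℂ := z * (Real.log x - Real.log y)
  have hsplit : ∀ s : ℝ, (x : ℂ) ^ (s * z) * (y : ℂ) ^ ((1 - s : ℝ) * z)
      = (y : ℂ) ^ z * Complex.exp (c * s) := by
    intro s
    simp only [ofReal_cpow_eq_exp hx, ofReal_cpow_eq_exp hy, ← Complex.exp_add, c]
    push_cast
    ring_nf
  have hx_eq : (x : ℂ) ^ z = (y : ℂ) ^ z * Complex.exp c := by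
    simp only [ofReal_cpow_eq_exp hx, ofReal_cpow_eq_exp hy, ← Complex.exp_add, c]
    ring_nf
  simp_rw [hsplit, integral_const_mul, hx_eq]
  linear_combination (-(y : ℂ) ^ z) * mul_integral_cexp_mul c

theorem one_add_mul_sub_one_pos {t r : ℝ} (ht : 0 < t) (hr : r ∈ Icc (0 : ℝ) 1) :
    0 < 1 + r * (t - 1) := by
  nlinarith [mul_nonneg hr.1 ht.le, hr.2]

theorem log_sub_log_eq_integral {x y : ℝ} (hx : 0 < x) (hy : 0 < y) :
    Real.log x - Real.log y =
      (x - y) * ∫ r in (0 : ℝ)..1, (1 + r * (x - 1))⁻¹ * (1 + r * (y - 1))⁻¹ := by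
  have hpos : ∀ t, 0 < t → ∀ r ∈ uIcc (0 : ℝ) 1, 0 < 1 + r * (t - 1) := fun t ht r hr =>
    one_add_mul_sub_one_pos ht (by rwa [uIcc_of_le zero_le_one] at hr)
  have hderiv : ∀ r ∈ uIcc (0 : ℝ) 1, HasDerivAt
      (fun r => Real.log (1 + r * (x - 1)) - Real.log (1 + r * (y - 1)))
      ((x - y) * ((1 + r * (x - 1))⁻¹ * (1 + r * (y - 1))⁻¹)) r := by
    intro r hr
    have hlin : ∀ t, HasDerivAt (fun r => 1 + r * (t - 1)) (t - 1) r := fun t => by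
      simpa using ((hasDerivAt_id r).mul_const (t - 1)).const_add 1
    refine (((hlin x).log (hpos x hx r hr).ne').sub
      ((hlin y).log (hpos y hy r hr).ne')).congr_deriv ?_
    rw [div_sub_div _ _ (hpos x hx r hr).ne' (hpos y hy r hr).ne', div_eq_mul_inv, mul_inv]
    ring
  have hcont : ContinuousOn (fun r => (x - y) * ((1 + r * (x - 1))⁻¹ * (1 + r * (y - 1))⁻¹))
      (uIcc 0 1) := by
    refine continuousOn_const.mul (ContinuousOn.mul ?_ ?_) <;>
      refine ContinuousOn.inv₀ (by fun_prop) fun r hr => (hpos _ ‹_› r hr).ne'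
  rw [← integral_const_mul, integral_eq_sub_of_hasDerivAt hderiv hcont.intervalIntegrable]
  simp

theorem integral_inv_one_add_mul_sub_one_sq {m : ℝ} (hm : 0 < m) :
    ∫ r in (0 : ℝ)..1, ((1 + r * (m - 1))⁻¹) ^ 2 = m⁻¹ := by
  have hpos : ∀ r ∈ uIcc (0 : ℝ) 1, 0 < 1 + r * (m - 1) := fun r hr =>
    one_add_mul_sub_one_pos hm (by rwa [uIcc_of_le zero_le_one] at hr)
  -- `r / (1 + r (m - 1))` is an antiderivative that does not divide by `m - 1`
  have hderiv : ∀ r ∈ uIcc (0 : ℝ) 1, HasDerivAt (fun r => r * (1 + r * (m - 1))⁻¹)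
      (((1 + r * (m - 1))⁻¹) ^ 2) r := by
    intro r hr
    have hlin : HasDerivAt (fun r => 1 + r * (m - 1)) (m - 1) r := by
      simpa using ((hasDerivAt_id r).mul_const (m - 1)).const_add 1
    refine ((hasDerivAt_id' r).mul (hlin.inv (hpos r hr).ne')).congr_deriv ?_
    have hne := (hpos r hr).ne'
    simp only [Pi.inv_apply]
    field_simp
    ring
  have hcont : ContinuousOn (fun r => ((1 + r * (m - 1))⁻¹) ^ 2) (uIcc 0 1) :=
    (ContinuousOn.inv₀ (by fun_prop) fun r hr => (hpos r hr).ne').pow 2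
  rw [integral_eq_sub_of_hasDerivAt hderiv hcont.intervalIntegrable]
  simp

theorem norm_ofReal_cpow_le {M t : ℝ} (hM : 0 < M) (ht : t ∈ Icc M⁻¹ M) (w : ℂ) :
    ‖(t : ℂ) ^ w‖ ≤ M ^ |w.re| := by
  have ht0 : 0 < t := (inv_pos.2 hM).trans_le ht.1
  rw [Complex.norm_cpow_eq_rpow_re_of_pos ht0]
  rcases le_or_gt 0 w.re with hw | hw
  · rw [abs_of_nonneg hw]
    exact Real.rpow_le_rpow ht0.le ht.2 hw
  · rw [abs_of_neg hw, Real.rpow_neg hM.le, ← Real.inv_rpow hM.le]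
    exact Real.rpow_le_rpow_of_nonpos (inv_pos.2 hM) ht.1 hw.le

theorem norm_ofReal_cpow_ofReal_mul_le {M t s : ℝ} (hM : 0 < M) (ht : t ∈ Icc M⁻¹ M) (hs : 0 ≤ s)
    (z : ℂ) : ‖(t : ℂ) ^ (s * z)‖ ≤ M ^ (s * |z.re|) := by
  simpa [Complex.re_ofReal_mul, abs_mul, abs_of_nonneg hs] using norm_ofReal_cpow_le hM ht (s * z)

theorem CStarRing.norm_coe_unitary_mul_mul_star {E : Type*} [NormedRing E] [StarRing E]
    [CStarRing E] (U V : unitary E) (X : E) : ‖(U : E) * X * star (V : E)‖ = ‖X‖ := by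
  rw [CStarRing.norm_mul_mem_unitary _ (Unitary.star_mem V.2), CStarRing.norm_coe_unitary_mul]

namespace Matrix

variable {n : Type*} [Fintype n] [DecidableEq n]

theorem diagonal_mul_mul_diagonal {α : Type*} [CommSemiring α] (d e : n → α) (X : Matrix n n α) :
    diagonal d * X * diagonal e = (of fun i j => d i * e j) ⊙ X := by
  ext i j
  simp only [mul_diagonal, diagonal_mul, hadamard_apply, of_apply]
  ring

theorem diagonal_mul_sub_mul_diagonal {α : Type*} [CommRing α] (d e : n → α) (X : Matrix n n α) :
    diagonal d * X - X * diagonal e = (of fun i j => d i - e j) ⊙ X := by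
  ext i j
  simp only [mul_diagonal, diagonal_mul, hadamard_apply, of_apply, sub_apply]
  ring

theorem intervalIntegral_diagonal_mul_mul_diagonal {a b : ℝ} {f g : ℝ → n → ℂ}
    (hf : ContinuousOn f (uIcc a b)) (hg : ContinuousOn g (uIcc a b)) (X : Matrix n n ℂ) :
    ∫ t in a..b, diagonal (f t) * X * diagonal (g t) =
      (of fun i j => ∫ t in a..b, f t i * g t j) ⊙ X := by
  have hint : IntervalIntegrable (fun t => diagonal (f t) * X * diagonal (g t))
      MeasureTheory.volume a b :=
    ContinuousOn.intervalIntegrable (by fun_prop)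
  ext i j
  have hentry := (entryLinearMap ℂ ℂ i j).toContinuousLinearMap.intervalIntegral_comp_comm hint
  simp only [LinearMap.coe_toContinuousLinearMap', entryLinearMap_apply] at hentry
  rw [← hentry, hadamard_apply, of_apply, ← integral_mul_const]
  simp only [diagonal_mul_mul_diagonal, hadamard_apply, of_apply]

theorem norm_diagonal_mul_mul_diagonal_le {𝕜 : Type*} [RCLike 𝕜] {d e : n → 𝕜} {c c' : ℝ}
    (hc : 0 ≤ c) (hc' : 0 ≤ c') (hd : ∀ i, ‖d i‖ ≤ c) (he : ∀ j, ‖e j‖ ≤ c') (X : Matrix n n 𝕜) :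
    ‖diagonal d * X * diagonal e‖ ≤ c * ‖X‖ * c' := by
  grw [l2_opNorm_mul, l2_opNorm_mul, l2_opNorm_diagonal, l2_opNorm_diagonal,
    (pi_norm_le_iff_of_nonneg hc).2 hd, (pi_norm_le_iff_of_nonneg hc').2 he]

namespace IsHermitian

variable {A B : Matrix n n ℂ}

theorem cpow_eq_conjStarAlgAut (hA : A.IsHermitian) (z : ℂ) :
    A.cpow z = Unitary.conjStarAlgAut ℂ _ hA.eigenvectorUnitary
      (diagonal fun i => (hA.eigenvalues i : ℂ) ^ z) := by
  rw [Matrix.cpow, dif_pos hA]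
  rfl

theorem cpow_one (hA : A.IsHermitian) : A.cpow 1 = A := by
  conv_rhs => rw [hA.spectral_theorem]
  simp [hA.cpow_eq_conjStarAlgAut, Function.comp_def]

theorem cpow_zero (hA : A.IsHermitian) : A.cpow 0 = 1 := by
  simp [hA.cpow_eq_conjStarAlgAut]

theorem cpow_mul_cpow (hA : A.IsHermitian) (h : ∀ i, hA.eigenvalues i ≠ 0) (z w : ℂ) :
    A.cpow z * A.cpow w = A.cpow (z + w) := by
  simp only [hA.cpow_eq_conjStarAlgAut, ← map_mul, diagonal_mul_diagonal,
    Complex.cpow_add _ _ (Complex.ofReal_ne_zero.2 (h _))]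

theorem cpow_neg_one (hA : A.IsHermitian) (h : ∀ i, hA.eigenvalues i ≠ 0) : A.cpow (-1) = A⁻¹ := by
  refine (inv_eq_left_inv ?_).symm
  conv_lhs => arg 2; rw [← hA.cpow_one]
  rw [hA.cpow_mul_cpow h, neg_add_cancel, hA.cpow_zero]

theorem norm_cpow (hA : A.IsHermitian) (z : ℂ) :
    ‖A.cpow z‖ = ‖fun i => (hA.eigenvalues i : ℂ) ^ z‖ := by
  rw [Matrix.cpow, dif_pos hA, CStarRing.norm_coe_unitary_mul_mul_star, l2_opNorm_diagonal]

theorem norm_eigenvalues_cpow_le (hA : A.IsHermitian) (z : ℂ) (i : n) :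
    ‖(hA.eigenvalues i : ℂ) ^ z‖ ≤ ‖A.cpow z‖ :=
  hA.norm_cpow z ▸ norm_le_pi_norm (fun i => (hA.eigenvalues i : ℂ) ^ z) i

theorem cpow_sub_cpow (hA : A.IsHermitian) (hB : B.IsHermitian) (z : ℂ) :
    A.cpow z - B.cpow z = (hA.eigenvectorUnitary : Matrix n n ℂ) *
      ((of fun i j => (hA.eigenvalues i : ℂ) ^ z - (hB.eigenvalues j : ℂ) ^ z) ⊙
        (star (hA.eigenvectorUnitary : Matrix n n ℂ) * hB.eigenvectorUnitary)) *
      star (hB.eigenvectorUnitary : Matrix n n ℂ) := by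
  have hU := Unitary.mul_star_self_of_mem hA.eigenvectorUnitary.2
  have hV := Unitary.mul_star_self_of_mem hB.eigenvectorUnitary.2
  rw [← diagonal_mul_sub_mul_diagonal, Matrix.cpow, dif_pos hA, Matrix.cpow, dif_pos hB]
  simp only [mul_sub, sub_mul, mul_assoc, hV, mul_one]
  rw [← mul_assoc _ (star _), hU, one_mul]

theorem norm_cpow_sub_cpow (hA : A.IsHermitian) (hB : B.IsHermitian) (z : ℂ) :
    ‖A.cpow z - B.cpow z‖ =
      ‖(of fun i j => (hA.eigenvalues i : ℂ) ^ z - (hB.eigenvalues j : ℂ) ^ z) ⊙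
        (star (hA.eigenvectorUnitary : Matrix n n ℂ) * hB.eigenvectorUnitary)‖ := by
  rw [hA.cpow_sub_cpow hB, CStarRing.norm_coe_unitary_mul_mul_star]

end IsHermitian

theorem PosDef.eigenvalues_mem_Icc {A : Matrix n n ℂ} (hA : A.PosDef) {M : ℝ} (hAM : ‖A‖ ≤ M)
    (hAM' : ‖A⁻¹‖ ≤ M) (i : n) : hA.1.eigenvalues i ∈ Icc M⁻¹ M := by
  have hpos := hA.eigenvalues_pos i
  have hle := hA.1.norm_eigenvalues_cpow_le 1 i
  have hle' := hA.1.norm_eigenvalues_cpow_le (-1) i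
  rw [hA.1.cpow_one, Complex.cpow_one, Complex.norm_real, Real.norm_of_nonneg hpos.le] at hle
  rw [hA.1.cpow_neg_one fun i => (hA.eigenvalues_pos i).ne', Complex.cpow_neg_one,
    ← Complex.ofReal_inv, Complex.norm_real, Real.norm_of_nonneg (inv_pos.2 hpos).le] at hle'
  exact ⟨inv_le_of_inv_le₀ hpos (hle'.trans hAM'), hle.trans hAM⟩

variable {a b : n → ℝ}

theorem hadamard_cpow_sub_eq_integral (ha : ∀ i, 0 < a i) (hb : ∀ j, 0 < b j) (z : ℂ)
    (K : Matrix n n ℂ) :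
    (of fun i j => (a i : ℂ) ^ z - (b j : ℂ) ^ z) ⊙ K =
      z • ∫ s in (0 : ℝ)..1, diagonal (fun i => (a i : ℂ) ^ (s * z)) *
        ((of fun i j => (Real.log (a i) - Real.log (b j) : ℂ)) ⊙ K) *
        diagonal (fun j => (b j : ℂ) ^ ((1 - s : ℝ) * z)) := by
  have hcont : ∀ (c : n → ℝ), (∀ i, 0 < c i) → ∀ w : ℝ → ℂ, Continuous w →
      ContinuousOn (fun s => fun i => (c i : ℂ) ^ w s) (uIcc 0 1) := fun c hc w hw =>
    (continuous_pi fun i => hw.const_cpow (.inl (Complex.ofReal_ne_zero.2 (hc i).ne'))).continuousOn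
  rw [intervalIntegral_diagonal_mul_mul_diagonal (hcont a ha _ (by fun_prop))
    (hcont b hb _ (by fun_prop))]
  ext i j
  simp only [hadamard_apply, of_apply, smul_apply, smul_eq_mul,
    ofReal_cpow_sub_ofReal_cpow_eq_integral (ha i) (hb j)]
  ring

theorem hadamard_log_sub_eq_integral (ha : ∀ i, 0 < a i) (hb : ∀ j, 0 < b j)
    (K : Matrix n n ℂ) :
    (of fun i j => (Real.log (a i) - Real.log (b j) : ℂ)) ⊙ K =
      ∫ r in (0 : ℝ)..1, diagonal (fun i => (((1 + r * (a i - 1))⁻¹ : ℝ) : ℂ)) *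
        ((of fun i j => (a i - b j : ℂ)) ⊙ K) *
        diagonal (fun j => (((1 + r * (b j - 1))⁻¹ : ℝ) : ℂ)) := by
  have hcont : ∀ (c : n → ℝ), (∀ i, 0 < c i) →
      ContinuousOn (fun r => fun i => (((1 + r * (c i - 1))⁻¹ : ℝ) : ℂ)) (uIcc 0 1) :=
    fun c hc => continuousOn_pi.2 fun i => Complex.continuous_ofReal.comp_continuousOn <|
      ContinuousOn.inv₀ (by fun_prop) fun r hr => (one_add_mul_sub_one_pos (hc i)
        (by rwa [uIcc_of_le zero_le_one] at hr)).ne'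
  rw [intervalIntegral_diagonal_mul_mul_diagonal (hcont a ha) (hcont b hb)]
  ext i j
  simp only [hadamard_apply, of_apply, ← Complex.ofReal_mul, intervalIntegral.integral_ofReal,
    ← Complex.ofReal_sub, log_sub_log_eq_integral (ha i) (hb j)]
  push_cast
  ring

theorem norm_hadamard_log_sub_le {m : ℝ} (hm : 0 < m) (ha : ∀ i, m ≤ a i) (hb : ∀ j, m ≤ b j)
    (K : Matrix n n ℂ) :
    ‖(of fun i j => (Real.log (a i) - Real.log (b j) : ℂ)) ⊙ K‖ ≤
      m⁻¹ * ‖(of fun i j => (a i - b j : ℂ)) ⊙ K‖ := by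
  set X := (of fun i j => (a i - b j : ℂ)) ⊙ K
  have hq : ∀ r ∈ Icc (0 : ℝ) 1, ∀ t, m ≤ t →
      ‖(((1 + r * (t - 1))⁻¹ : ℝ) : ℂ)‖ ≤ (1 + r * (m - 1))⁻¹ := by
    intro r hr t ht
    have hpos := one_add_mul_sub_one_pos hm hr
    have hle : 1 + r * (m - 1) ≤ 1 + r * (t - 1) := by nlinarith [hr.1]
    rw [Complex.norm_real, Real.norm_of_nonneg (inv_nonneg.2 (hpos.trans_le hle).le)]
    exact inv_anti₀ hpos hle
  rw [hadamard_log_sub_eq_integral (fun i => hm.trans_le (ha i)) (fun j => hm.trans_le (hb j)),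
    ← integral_inv_one_add_mul_sub_one_sq hm, ← intervalIntegral.integral_mul_const]
  refine intervalIntegral.norm_integral_le_of_norm_le zero_le_one
    (Filter.Eventually.of_forall fun r hr => ?_) ?_
  · have hr' : r ∈ Icc (0 : ℝ) 1 := Ioc_subset_Icc_self hr
    have hpos := (one_add_mul_sub_one_pos hm hr').le
    calc _ ≤ (1 + r * (m - 1))⁻¹ * ‖X‖ * (1 + r * (m - 1))⁻¹ :=
          norm_diagonal_mul_mul_diagonal_le (inv_nonneg.2 hpos) (inv_nonneg.2 hpos)
            (fun i => hq r hr' _ (ha i)) (fun j => hq r hr' _ (hb j)) X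
      _ = _ := by ring
  · refine (ContinuousOn.mul ?_ continuousOn_const).intervalIntegrable
    exact (ContinuousOn.inv₀ (by fun_prop) fun r hr => (one_add_mul_sub_one_pos hm
      (by rwa [uIcc_of_le zero_le_one] at hr)).ne').pow 2

theorem norm_hadamard_cpow_sub_le {M : ℝ} (hM : 0 < M) (ha : ∀ i, a i ∈ Icc M⁻¹ M)
    (hb : ∀ j, b j ∈ Icc M⁻¹ M) (z : ℂ) (K : Matrix n n ℂ) :
    ‖(of fun i j => (a i : ℂ) ^ z - (b j : ℂ) ^ z) ⊙ K‖ ≤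
      ‖z‖ * M ^ |z.re| * ‖(of fun i j => (Real.log (a i) - Real.log (b j) : ℂ)) ⊙ K‖ := by
  set L := (of fun i j => (Real.log (a i) - Real.log (b j) : ℂ)) ⊙ K
  have hpos : ∀ t ∈ Icc M⁻¹ M, 0 < t := fun t ht => (inv_pos.2 hM).trans_le ht.1
  have hbound : ∀ s : ℝ, s ∈ uIoc 0 1 → ‖diagonal (fun i => (a i : ℂ) ^ (s * z)) * L *
      diagonal (fun j => (b j : ℂ) ^ ((1 - s : ℝ) * z))‖ ≤ M ^ |z.re| * ‖L‖ := by
    intro s hs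
    rw [uIoc_of_le zero_le_one] at hs
    calc _ ≤ M ^ (s * |z.re|) * ‖L‖ * M ^ ((1 - s) * |z.re|) :=
          norm_diagonal_mul_mul_diagonal_le (by positivity) (by positivity)
            (fun i => norm_ofReal_cpow_ofReal_mul_le hM (ha i) hs.1.le z)
            (fun j => norm_ofReal_cpow_ofReal_mul_le hM (hb j) (sub_nonneg.2 hs.2) z) L
      _ = M ^ |z.re| * ‖L‖ := by
          rw [mul_right_comm, ← Real.rpow_add hM]
          ring_nf
  rw [hadamard_cpow_sub_eq_integral (fun i => hpos _ (ha i)) (fun j => hpos _ (hb j)), norm_smul,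
    mul_assoc]
  gcongr
  simpa using intervalIntegral.norm_integral_le_of_norm_le_const hbound

end Matrix

/-- For positive definite matrices `A, B` and any `z ∈ ℂ`,
`‖A^z - B^z‖ ≤ |z| · M^(1+|Re z|) · ‖A - B‖` where
`M = max{‖A‖, ‖A⁻¹‖, ‖B‖, ‖B⁻¹‖}` (operator norms). -/
theorem cpow_sub_cpow_opNorm_le {n : Type*} [Fintype n] [DecidableEq n]
    (A B : Matrix n n ℂ) (hA : A.PosDef) (hB : B.PosDef) (z : ℂ)
    (M : ℝ) (hM : M = max (max ‖A‖ ‖A⁻¹‖) (max ‖B‖ ‖B⁻¹‖)) :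
    ‖A.cpow z - B.cpow z‖ ≤ ‖z‖ * M ^ (1 + |z.re|) * ‖A - B‖ := by
  rcases isEmpty_or_nonempty n with _ | ⟨⟨i⟩⟩
  · simp [Subsingleton.elim (A - B) 0, Subsingleton.elim (A.cpow z - B.cpow z) 0]
  have ha := hA.eigenvalues_mem_Icc (M := M) (by simp [hM]) (by simp [hM])
  have hb := hB.eigenvalues_mem_Icc (M := M) (by simp [hM]) (by simp [hM])
  have hM0 : 0 < M := (hA.eigenvalues_pos i).trans_le (ha i).2
  have hAB : ‖A - B‖ = ‖(of fun i j => (hA.1.eigenvalues i - hB.1.eigenvalues j : ℂ)) ⊙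
      (star (hA.1.eigenvectorUnitary : Matrix n n ℂ) * hB.1.eigenvectorUnitary)‖ := by
    simpa [hA.1.cpow_one, hB.1.cpow_one] using hA.1.norm_cpow_sub_cpow hB.1 1
  rw [hA.1.norm_cpow_sub_cpow hB.1, hAB, Real.rpow_add hM0, Real.rpow_one]
  calc _ ≤ ‖z‖ * M ^ |z.re| * ‖(of fun i j => (Real.log (hA.1.eigenvalues i) -
          Real.log (hB.1.eigenvalues j) : ℂ)) ⊙ _‖ := norm_hadamard_cpow_sub_le hM0 ha hb z _
    _ ≤ ‖z‖ * M ^ |z.re| * (M⁻¹⁻¹ * _) := by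
        gcongr
        exact norm_hadamard_log_sub_le (inv_pos.2 hM0) (fun i => (ha i).1) (fun j => (hb j).1) _
    _ = _ := by rw [inv_inv]; ring
end

section
/- If ρ and σ are quantum states (density matrices) with e^{-c}·σ ≤ ρ ≤ e^{c}·σ in the Loewner order for some c ≥ 0, then the trace norm of ρ - σ is at most 2c·e^{c}·(trace of σ), in particular ‖ρ - σ‖₁ ≤ 2c·e^{c} when σ is a state. (Special case used: if e^{-2βh}·d^{-1}·I ≤ ω ≤ e^{2βh}·d^{-1}·I then ‖ω - d^{-1}I‖₁ ≤ 2βh·e^{2βh}.) -/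
open scoped ComplexOrder

/-- The trace norm `‖A‖₁ = Tr √(A†A)` (sum of singular values). -/
noncomputable def traceNorm {m : Type*} [Fintype m] [DecidableEq m] (A : Matrix m m ℂ) : ℝ :=
  ∑ i, Real.sqrt ((Matrix.posSemidef_conjTranspose_mul_self A).1.eigenvalues i)

/-- A quantum state (density matrix): positive semidefinite with unit trace. -/
def IsState {m : Type*} [Fintype m] (ρ : Matrix m m ℂ) : Prop :=
  ρ.PosSemidef ∧ Matrix.trace ρ = 1

/-!
Write `ρ - σ = A` and `B = (e^c - 1) σ`. The two Loewner bounds say `-B ≤ A ≤ B`, using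
`1 - e^{-c} ≤ e^c - 1` for the lower one. Testing against an eigenvector `v` of `A` gives
`|λ| ≤ ⟨v, B v⟩`, and summing over an orthonormal eigenbasis gives `‖A‖₁ ≤ Tr B`.
Finally `e^c - 1 ≤ c e^c` by convexity of `exp`.
-/

open Matrix

lemma Real.exp_sub_one_le_mul_exp (x : ℝ) : Real.exp x - 1 ≤ x * Real.exp x := by
  have h := mul_le_mul_of_nonneg_right (Real.add_one_le_exp (-x)) (Real.exp_pos x).le
  rw [← Real.exp_add, neg_add_cancel, Real.exp_zero] at h
  linarith

section

variable {𝕜 ι n : Type*} [RCLike 𝕜] [Fintype n] [DecidableEq n]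

lemma Matrix.trace_eq_sum_dotProduct_mulVec [Fintype ι] (B : Matrix n n 𝕜)
    (b : OrthonormalBasis ι 𝕜 (EuclideanSpace 𝕜 n)) :
    B.trace = ∑ i, star ⇑(b i) ⬝ᵥ (B *ᵥ ⇑(b i)) := by
  rw [← trace_toLin_eq B (EuclideanSpace.basisFun n 𝕜).toBasis,
    ← toEuclideanLin_eq_toLin_orthonormal, LinearMap.trace_eq_sum_inner _ b]
  simp [EuclideanSpace.inner_eq_star_dotProduct, dotProduct_comm]

lemma Matrix.IsHermitian.roots_charpoly_cfc {A : Matrix n n 𝕜} (hA : A.IsHermitian)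
    (f : ℝ → ℝ) :
    (cfc f A).charpoly.roots = Multiset.map (fun i ↦ (f (hA.eigenvalues i) : 𝕜)) Finset.univ.val := by
  rw [hA.charpoly_cfc_eq, Polynomial.roots_prod]
  · simp
  · simp [Finset.prod_ne_zero_iff, Polynomial.X_sub_C_ne_zero]

end

section

variable {n : Type*} [Fintype n] [DecidableEq n]

lemma traceNorm_eq_sum_abs_eigenvalues {A : Matrix n n ℂ} (hA : A.IsHermitian) :
    traceNorm A = ∑ i, |hA.eigenvalues i| := by
  have hB := (posSemidef_conjTranspose_mul_self A).1
  have hsq : Aᴴ * A = cfc (· ^ 2 : ℝ → ℝ) A := by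
    rw [cfc_pow_id _ _ hA.isSelfAdjoint, hA.eq, sq]
  have hroots := hB.roots_charpoly_eq_eigenvalues
  rw [congrArg (fun M ↦ M.charpoly.roots) hsq, hA.roots_charpoly_cfc] at hroots
  -- Only the multisets agree: `eigenvalues` lists each spectrum in sorted order.
  have heig : Multiset.map hB.eigenvalues Finset.univ.val =
      Multiset.map (fun i ↦ hA.eigenvalues i ^ 2) Finset.univ.val := by
    simpa [← Complex.ofReal_pow] using (congrArg (Multiset.map Complex.re) hroots).symm
  simp_rw [traceNorm, ← Real.sqrt_sq_eq_abs, Finset.sum_eq_multiset_sum]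
  simpa [Multiset.map_map, Function.comp_def] using congrArg (fun s ↦ (s.map Real.sqrt).sum) heig

lemma traceNorm_le_re_trace_of_posSemidef_sub_of_posSemidef_add {A B : Matrix n n ℂ}
    (hsub : (B - A).PosSemidef) (hadd : (B + A).PosSemidef) : traceNorm A ≤ B.trace.re := by
  have hA : A.IsHermitian := by
    have hsub' := hsub.1.eq
    have hadd' := hadd.1.eq
    rw [conjTranspose_sub] at hsub'
    rw [conjTranspose_add] at hadd'
    unfold IsHermitian
    linear_combination (norm := module) (1 / 2 : ℂ) • hadd' - (1 / 2 : ℂ) • hsub'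
  have habs : ∀ i, |hA.eigenvalues i| ≤
      (star ⇑(hA.eigenvectorBasis i) ⬝ᵥ (B *ᵥ ⇑(hA.eigenvectorBasis i))).re := by
    intro i
    have hsub_i := (Complex.le_def.mp (hsub.dotProduct_mulVec_nonneg (hA.eigenvectorBasis i))).1
    have hadd_i := (Complex.le_def.mp (hadd.dotProduct_mulVec_nonneg (hA.eigenvectorBasis i))).1
    simp only [sub_mulVec, add_mulVec, dotProduct_sub, dotProduct_add, Complex.sub_re,
      Complex.add_re, Complex.zero_re] at hsub_i hadd_i
    rw [hA.eigenvalues_eq i, abs_le]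
    constructor <;> simp only [RCLike.re_to_complex] <;> linarith
  rw [traceNorm_eq_sum_abs_eigenvalues hA, trace_eq_sum_dotProduct_mulVec B hA.eigenvectorBasis,
    Complex.re_sum]
  exact Finset.sum_le_sum fun i _ ↦ habs i

end

theorem traceNorm_sub_le_of_loewner_general {m : Type*} [Fintype m] [DecidableEq m]
    (ρ σ : Matrix m m ℂ) (hσ : σ.PosSemidef)
    (hσ1 : Matrix.trace σ = 1)
    (c : ℝ) (hc : 0 ≤ c)
    (hlow : (ρ - (Real.exp (-c) : ℂ) • σ).PosSemidef)
    (hup : ((Real.exp c : ℂ) • σ - ρ).PosSemidef) :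
    traceNorm (ρ - σ) ≤ 2 * c * Real.exp c * (Matrix.trace σ).re ∧
      traceNorm (ρ - σ) ≤ 2 * c * Real.exp c := by
  have hcosh : 0 ≤ Real.exp c + Real.exp (-c) - 2 := by
    linarith [Real.one_le_cosh c, Real.cosh_eq c]
  have hdist : traceNorm (ρ - σ) ≤ (Real.exp c - 1) * (Matrix.trace σ).re := by
    have h := traceNorm_le_re_trace_of_posSemidef_sub_of_posSemidef_add
      (A := ρ - σ) (B := ((Real.exp c - 1 : ℝ) : ℂ) • σ) ?_ ?_
    · rwa [trace_smul, smul_eq_mul, Complex.re_ofReal_mul] at h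
    · convert hup using 1
      push_cast
      module
    · convert hlow.add (hσ.smul (Complex.zero_le_real.mpr hcosh)) using 1
      push_cast
      module
  have hexp : Real.exp c - 1 ≤ 2 * c * Real.exp c := by
    nlinarith [Real.exp_sub_one_le_mul_exp c, Real.exp_pos c]
  have htr : 0 ≤ (Matrix.trace σ).re := (Complex.le_def.mp hσ.trace_nonneg).1
  have hbound := hdist.trans (mul_le_mul_of_nonneg_right hexp htr)
  exact ⟨hbound, by simpa [hσ1] using hbound⟩

/-- If `e^{-c}·σ ≤ ρ ≤ e^{c}·σ` in the Loewner order for states `ρ, σ` and `c ≥ 0`,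
then `‖ρ - σ‖₁ ≤ 2c·e^{c}·Tr σ`; in particular `‖ρ - σ‖₁ ≤ 2c·e^c` since `Tr σ = 1`. -/
theorem traceNorm_sub_le_of_loewner {m : Type*} [Fintype m] [DecidableEq m]
    (ρ σ : Matrix m m ℂ) (hρ : ρ.PosSemidef) (hσ : σ.PosSemidef)
    (hρ1 : Matrix.trace ρ = 1) (hσ1 : Matrix.trace σ = 1)
    (c : ℝ) (hc : 0 ≤ c)
    (hlow : (ρ - (Real.exp (-c) : ℂ) • σ).PosSemidef)
    (hup : ((Real.exp c : ℂ) • σ - ρ).PosSemidef) :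
    traceNorm (ρ - σ) ≤ 2 * c * Real.exp c * (Matrix.trace σ).re ∧
      traceNorm (ρ - σ) ≤ 2 * c * Real.exp c :=
  traceNorm_sub_le_of_loewner_general ρ σ hσ hσ1 c hc hlow hup
end

section
/- For an n-site system, the quantum W₁ norm of any traceless self-adjoint operator X satisfies ‖X‖_{W₁} ≤ Σ_{k=0}^{n-1} ‖Tr_{1…k} X‖₁, where Tr_{1…0}X = X. -/
open scoped ComplexOrder

/-- Extend a configuration on `V \ {v}` by the value `k` at site `v`. -/
def insertAt {V : Type*} [DecidableEq V] {d : ℕ} (v : V) (k : Fin d)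
    (s : {w : V // w ≠ v} → Fin d) : V → Fin d :=
  fun w => if h : w = v then k else s ⟨w, h⟩

/-- Partial trace over the site `v` of an operator on `n` qudits. -/
noncomputable def ptraceSite {V : Type*} [Fintype V] [DecidableEq V] {d : ℕ} (v : V)
    (X : Matrix (V → Fin d) (V → Fin d) ℂ) :
    Matrix ({w : V // w ≠ v} → Fin d) ({w : V // w ≠ v} → Fin d) ℂ :=
  Matrix.of fun s t => ∑ k : Fin d, X (insertAt v k s) (insertAt v k t)

/-- Extend a configuration on `V \ A` by a configuration `f` on `A`. -/
def insertSet {V : Type*} [DecidableEq V] {d : ℕ} (A : Finset V)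
    (f : {w : V // w ∈ A} → Fin d) (s : {w : V // w ∉ A} → Fin d) : V → Fin d :=
  fun w => if h : w ∈ A then f ⟨w, h⟩ else s ⟨w, h⟩

/-- Partial trace over the sites in `A` of an operator on `n` qudits. -/
noncomputable def ptraceSet {V : Type*} [Fintype V] [DecidableEq V] {d : ℕ} (A : Finset V)
    (X : Matrix (V → Fin d) (V → Fin d) ℂ) :
    Matrix ({w : V // w ∉ A} → Fin d) ({w : V // w ∉ A} → Fin d) ℂ :=
  Matrix.of fun s t =>
    ∑ f : {w : V // w ∈ A} → Fin d, X (insertSet A f s) (insertSet A f t)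

/-- The quantum Wasserstein norm of order 1 of De Palma et al.:
`‖X‖_{W₁} = min { (1/2) ∑_v ‖Y_v‖₁ : X = ∑_v Y_v, Tr_v Y_v = 0 }`. -/
noncomputable def W1norm {V : Type*} [Fintype V] [DecidableEq V] {d : ℕ}
    (X : Matrix (V → Fin d) (V → Fin d) ℂ) : ℝ :=
  sInf { r : ℝ | ∃ Y : V → Matrix (V → Fin d) (V → Fin d) ℂ,
    X = ∑ v, Y v ∧ (∀ v, ptraceSite v (Y v) = 0) ∧
      r = (1 / 2) * ∑ v, traceNorm (Y v) }

/-!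
Let `P k = 𝟙/d^k ⊗ Tr_{1…k} X` be `X` with its first `k` qudits replaced by the maximally mixed
state. Then `P 0 = X`, and `P n = 0` because `X` is traceless. Depolarizing qudit `k + 1` does not
change the partial trace over it, so `Y k = P k - P (k + 1)` satisfies `Tr_{k+1} Y k = 0`, and
`X = ∑ Y k` is admissible in the definition of `‖X‖_{W₁}`. Finally
`‖Y k‖₁ ≤ ‖P k‖₁ + ‖P (k + 1)‖₁` and `‖P k‖₁ = ‖Tr_{1…k} X‖₁`.

The triangle inequality for the trace norm comes from its variational form
`‖A‖₁ = max {Re Tr (B† A) : B† B ≤ 1}`.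
-/

open Function Matrix Kronecker
open scoped MatrixOrder InnerProductSpace

section TraceNorm

variable {m : Type*} [Fintype m]

lemma Matrix.trace_submatrix_equiv_self {n : Type*} [Fintype n] (e : m ≃ n) (M : Matrix n n ℂ) :
    (M.submatrix e e).trace = M.trace :=
  Fintype.sum_equiv e _ _ fun _ => rfl

variable [DecidableEq m]

lemma Matrix.IsHermitian.trace_cfc {M : Matrix m m ℂ} (hM : M.IsHermitian) (f : ℝ → ℝ) :
    (cfc f M).trace = ∑ i, (f (hM.eigenvalues i) : ℂ) := by
  rw [hM.cfc_eq, IsHermitian.cfc, Unitary.conjStarAlgAut_apply, trace_mul_cycle,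
    Unitary.coe_star_mul_self, one_mul, trace_diagonal]
  rfl

lemma Matrix.trace_eq_sum_inner_toEuclideanLin {ι : Type*} [Fintype ι] (M : Matrix m m ℂ)
    (b : OrthonormalBasis ι ℂ (EuclideanSpace ℂ m)) :
    M.trace = ∑ j, ⟪b j, toEuclideanLin M (b j)⟫_ℂ := by
  rw [← LinearMap.trace_eq_sum_inner, toEuclideanLin_eq_toLin_orthonormal, trace_toLin_eq]

lemma Matrix.inner_toEuclideanLin_conjTranspose_mul (A B : Matrix m m ℂ)
    (x y : EuclideanSpace ℂ m) :
    ⟪x, toEuclideanLin (Bᴴ * A) y⟫_ℂ = ⟪toEuclideanLin B x, toEuclideanLin A y⟫_ℂ := by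
  rw [toLpLin_mul_same, toEuclideanLin_conjTranspose_eq_adjoint, LinearMap.comp_apply,
    LinearMap.adjoint_inner_right]

lemma Matrix.norm_toEuclideanLin_le_of_conjTranspose_mul_self_le_one {B : Matrix m m ℂ}
    (hB : Bᴴ * B ≤ 1) (x : EuclideanSpace ℂ m) : ‖toEuclideanLin B x‖ ≤ ‖x‖ := by
  have h := (isPositive_toEuclideanLin_iff.mpr (le_iff.mp hB)).re_inner_nonneg_right x
  rw [map_sub, LinearMap.sub_apply, inner_sub_right, map_sub,
    inner_toEuclideanLin_conjTranspose_mul, toLpLin_one, LinearMap.id_apply,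
    inner_self_eq_norm_sq, inner_self_eq_norm_sq, sub_nonneg] at h
  exact (pow_le_pow_iff_left₀ (norm_nonneg _) (norm_nonneg _) two_ne_zero).mp h

lemma Matrix.norm_toEuclideanLin_eigenvectorBasis (A : Matrix m m ℂ)
    (hM : (Aᴴ * A).IsHermitian) (j : m) :
    ‖toEuclideanLin A (hM.eigenvectorBasis j)‖ = √(hM.eigenvalues j) := by
  rw [eq_comm, Real.sqrt_eq_iff_eq_sq ((posSemidef_conjTranspose_mul_self A).eigenvalues_nonneg j)
    (norm_nonneg _), ← inner_self_eq_norm_sq (𝕜 := ℂ), ← inner_toEuclideanLin_conjTranspose_mul,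
    toLpLin_apply, hM.mulVec_eigenvectorBasis]
  simp

lemma traceNorm_nonneg (A : Matrix m m ℂ) : 0 ≤ traceNorm A :=
  Finset.sum_nonneg fun _ _ => Real.sqrt_nonneg _

lemma traceNorm_eq_re_trace_of_mul_self_eq {A S : Matrix m m ℂ} (hS : S.PosSemidef)
    (h : S * S = Aᴴ * A) :
    traceNorm A = S.trace.re := by
  have hM := posSemidef_conjTranspose_mul_self A
  rw [← CFC.sqrt_unique h hS.nonneg, CFC.sqrt_eq_real_sqrt _ hM.nonneg, cfcₙ_eq_cfc,
    hM.1.trace_cfc]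
  simp [traceNorm]

lemma Matrix.posSemidef_sqrt_conjTranspose_mul_self (A : Matrix m m ℂ) :
    (CFC.sqrt (Aᴴ * A)).PosSemidef :=
  (CFC.sqrt_nonneg _).posSemidef

lemma Matrix.sqrt_mul_sqrt_conjTranspose_mul_self (A : Matrix m m ℂ) :
    CFC.sqrt (Aᴴ * A) * CFC.sqrt (Aᴴ * A) = Aᴴ * A :=
  CFC.sqrt_mul_sqrt_self _ (posSemidef_conjTranspose_mul_self A).nonneg

lemma traceNorm_eq_re_trace_sqrt (A : Matrix m m ℂ) :
    traceNorm A = (CFC.sqrt (Aᴴ * A)).trace.re :=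
  traceNorm_eq_re_trace_of_mul_self_eq (posSemidef_sqrt_conjTranspose_mul_self A)
    (sqrt_mul_sqrt_conjTranspose_mul_self A)

lemma traceNorm_smul (c : ℂ) (A : Matrix m m ℂ) : traceNorm (c • A) = ‖c‖ * traceNorm A := by
  rw [traceNorm_eq_re_trace_sqrt A, traceNorm_eq_re_trace_of_mul_self_eq
    ((posSemidef_sqrt_conjTranspose_mul_self A).smul (by positivity : (0 : ℂ) ≤ ‖c‖)),
    trace_smul, smul_eq_mul, Complex.re_ofReal_mul]
  rw [smul_mul_smul, sqrt_mul_sqrt_conjTranspose_mul_self, conjTranspose_smul, smul_mul_smul,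
    ← Complex.ofReal_mul, ← sq, Complex.sq_norm, Complex.normSq_eq_conj_mul_self]
  rfl

lemma traceNorm_neg (A : Matrix m m ℂ) : traceNorm (-A) = traceNorm A := by
  simpa using traceNorm_smul (-1) A

lemma traceNorm_zero : traceNorm (0 : Matrix m m ℂ) = 0 := by
  simpa using traceNorm_smul 0 (0 : Matrix m m ℂ)

lemma traceNorm_submatrix_equiv {n : Type*} [Fintype n] [DecidableEq n] (e : m ≃ n)
    (A : Matrix n n ℂ) : traceNorm (A.submatrix e e) = traceNorm A := by
  rw [traceNorm_eq_re_trace_sqrt A, traceNorm_eq_re_trace_of_mul_self_eq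
    ((posSemidef_sqrt_conjTranspose_mul_self A).submatrix e), trace_submatrix_equiv_self]
  rw [conjTranspose_submatrix, submatrix_mul_equiv, submatrix_mul_equiv,
    sqrt_mul_sqrt_conjTranspose_mul_self]

lemma traceNorm_one_kronecker {p : Type*} [Fintype p] [DecidableEq p] (A : Matrix m m ℂ) :
    traceNorm ((1 : Matrix p p ℂ) ⊗ₖ A) = Fintype.card p * traceNorm A := by
  rw [traceNorm_eq_re_trace_sqrt A, traceNorm_eq_re_trace_of_mul_self_eq
    (PosSemidef.one.kronecker (posSemidef_sqrt_conjTranspose_mul_self A))]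
  · rw [trace_kronecker, trace_one]
    simp
  · rw [← mul_kronecker_mul, conjTranspose_kronecker, ← mul_kronecker_mul,
      sqrt_mul_sqrt_conjTranspose_mul_self]
    simp

lemma re_trace_conjTranspose_mul_le_traceNorm {A B : Matrix m m ℂ} (hB : Bᴴ * B ≤ 1) :
    (Bᴴ * A).trace.re ≤ traceNorm A := by
  set hM := (posSemidef_conjTranspose_mul_self A).1
  set v := hM.eigenvectorBasis
  rw [trace_eq_sum_inner_toEuclideanLin _ v, Complex.re_sum, traceNorm]
  refine Finset.sum_le_sum fun j _ => ?_
  calc (⟪v j, toEuclideanLin (Bᴴ * A) (v j)⟫_ℂ).re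
      = RCLike.re ⟪toEuclideanLin B (v j), toEuclideanLin A (v j)⟫_ℂ := by
        rw [inner_toEuclideanLin_conjTranspose_mul]
        rfl
    _ ≤ ‖toEuclideanLin B (v j)‖ * ‖toEuclideanLin A (v j)‖ := re_inner_le_norm _ _
    _ ≤ 1 * √(hM.eigenvalues j) := by
        rw [norm_toEuclideanLin_eigenvectorBasis]
        gcongr
        exact (norm_toEuclideanLin_le_of_conjTranspose_mul_self_le_one hB _).trans_eq
          (v.orthonormal.1 j)
    _ = √(hM.eigenvalues j) := one_mul _

/-- The maximizer is `A |A|⁺`; the pseudo-inverse `|A|⁺ = f (A†A)` with `f x = (√x)⁻¹` relies on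
`(√0)⁻¹ = 0`. -/
lemma exists_conjTranspose_mul_self_le_one_re_trace_eq_traceNorm (A : Matrix m m ℂ) :
    ∃ B : Matrix m m ℂ, Bᴴ * B ≤ 1 ∧ (Bᴴ * A).trace.re = traceNorm A := by
  have hM : (Aᴴ * A).IsHermitian := (posSemidef_conjTranspose_mul_self A).1
  have hcont (f : ℝ → ℝ) : ContinuousOn f (spectrum ℝ (Aᴴ * A)) :=
    (Aᴴ * A).finite_real_spectrum.continuousOn f
  set G := cfc (fun x : ℝ => (√x)⁻¹) (Aᴴ * A)
  have hG : Gᴴ = G := (cfc_predicate (R := ℝ) _ (Aᴴ * A)).star_eq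
  refine ⟨A * G, ?_, ?_⟩
  · have : (A * G)ᴴ * (A * G) = cfc (fun x : ℝ => (√x)⁻¹ * x * (√x)⁻¹) (Aᴴ * A) := by
      rw [cfc_mul _ _ _ (hcont _) (hcont _), cfc_mul _ _ _ (hcont _) (hcont _), cfc_id' ℝ (Aᴴ * A),
        conjTranspose_mul, hG]
      simp only [G, Matrix.mul_assoc]
    rw [this]
    refine cfc_le_one _ _ fun x _ => ?_
    rw [inv_mul_eq_div, Real.div_sqrt]
    exact mul_inv_le_one
  · have : (A * G)ᴴ * A = cfc (fun x : ℝ => (√x)⁻¹ * x) (Aᴴ * A) := by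
      rw [cfc_mul _ _ _ (hcont _) (hcont _), cfc_id' ℝ (Aᴴ * A), conjTranspose_mul, hG,
        Matrix.mul_assoc]
    rw [this, hM.trace_cfc, traceNorm, Complex.re_sum]
    simp [← div_eq_inv_mul, Real.div_sqrt]

lemma traceNorm_add_le (A B : Matrix m m ℂ) : traceNorm (A + B) ≤ traceNorm A + traceNorm B := by
  obtain ⟨E, hE, hEq⟩ := exists_conjTranspose_mul_self_le_one_re_trace_eq_traceNorm (A + B)
  rw [← hEq, Matrix.mul_add, trace_add, Complex.add_re]
  exact add_le_add (re_trace_conjTranspose_mul_le_traceNorm hE)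
    (re_trace_conjTranspose_mul_le_traceNorm hE)

lemma traceNorm_sub_le (A B : Matrix m m ℂ) : traceNorm (A - B) ≤ traceNorm A + traceNorm B := by
  simpa [sub_eq_add_neg, traceNorm_neg] using traceNorm_add_le A (-B)

lemma sum_traceNorm_sub_succ_le {P : ℕ → Matrix m m ℂ} {n : ℕ} (hPn : P n = 0) :
    ∑ k ∈ Finset.range n, traceNorm (P k - P (k + 1)) ≤
      2 * ∑ k ∈ Finset.range n, traceNorm (P k) := by
  have hshift : ∑ k ∈ Finset.range n, traceNorm (P (k + 1)) + traceNorm (P 0) =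
      ∑ k ∈ Finset.range n, traceNorm (P k) + traceNorm (P n) := by
    rw [← Finset.sum_range_succ' (fun k => traceNorm (P k)), Finset.sum_range_succ]
  rw [hPn, traceNorm_zero] at hshift
  calc ∑ k ∈ Finset.range n, traceNorm (P k - P (k + 1))
      ≤ ∑ k ∈ Finset.range n, (traceNorm (P k) + traceNorm (P (k + 1))) :=
        Finset.sum_le_sum fun k _ => traceNorm_sub_le _ _
    _ ≤ 2 * ∑ k ∈ Finset.range n, traceNorm (P k) := by
        rw [Finset.sum_add_distrib]
        linarith [traceNorm_nonneg (P 0)]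

end TraceNorm

lemma Function.sum_sum_updateFinset₂ {ι β M : Type*} [DecidableEq ι] [Fintype β]
    [AddCommMonoid M] {s t : Finset ι} (hst : Disjoint s t) (F : (ι → β) → (ι → β) → M)
    (x y : ι → β) :
    ∑ g : s → β, ∑ f : t → β,
        F (updateFinset (updateFinset x s g) t f) (updateFinset (updateFinset y s g) t f) =
      ∑ h : ↥(s ∪ t) → β, F (updateFinset x (s ∪ t) h) (updateFinset y (s ∪ t) h) := by
  simp only [updateFinset_updateFinset hst, ← Fintype.sum_prod_type']
  exact Fintype.sum_equiv (Equiv.piFinsetUnion (fun _ => β) hst) _ _ fun _ => rfl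

lemma Function.sum_updateFinset_singleton₂ {ι β M : Type*} [DecidableEq ι] [Fintype β]
    [AddCommMonoid M] (i : ι) (F : (ι → β) → (ι → β) → M) (x y : ι → β) :
    ∑ g : ({i} : Finset ι) → β, F (updateFinset x {i} g) (updateFinset y {i} g) =
      ∑ b : β, F (update x i b) (update y i b) := by
  simp only [updateFinset_singleton]
  exact Fintype.sum_equiv (Equiv.funUnique _ β) _ _ fun _ => rfl

section Sites

variable {V : Type*} [DecidableEq V] {d : ℕ}

@[simp]
lemma insertAt_self (v : V) (k : Fin d) (s : {w : V // w ≠ v} → Fin d) : insertAt v k s v = k :=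
  dif_pos rfl

@[simp]
lemma update_insertAt (v : V) (k j : Fin d) (s : {w : V // w ≠ v} → Fin d) :
    update (insertAt v k s) v j = insertAt v j s := by
  funext w
  by_cases h : w = v
  · subst h
    simp
  · simp [insertAt, h]

variable [Fintype V]

lemma ptraceSite_sub (v : V) (X Y : Matrix (V → Fin d) (V → Fin d) ℂ) :
    ptraceSite v (X - Y) = ptraceSite v X - ptraceSite v Y := by
  ext s t
  simp [ptraceSite, Finset.sum_sub_distrib]

lemma W1norm_le_of_eq_sum {X : Matrix (V → Fin d) (V → Fin d) ℂ}
    (Y : V → Matrix (V → Fin d) (V → Fin d) ℂ) (hXY : X = ∑ v, Y v)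
    (hY : ∀ v, ptraceSite v (Y v) = 0) :
    W1norm X ≤ 1 / 2 * ∑ v, traceNorm (Y v) :=
  csInf_le ⟨0, by
    rintro r ⟨Y', -, -, rfl⟩
    exact mul_nonneg (by norm_num) (Finset.sum_nonneg fun v _ => traceNorm_nonneg _)⟩
    ⟨Y, hXY, hY, rfl⟩

/-- The completely depolarizing channel on the sites `A`: `X ↦ 1_A / d^|A| ⊗ Tr_A X`. -/
noncomputable def depolarize (A : Finset V) (X : Matrix (V → Fin d) (V → Fin d) ℂ) :
    Matrix (V → Fin d) (V → Fin d) ℂ :=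
  ((d : ℂ) ^ A.card)⁻¹ •
    ((1 : Matrix (A → Fin d) (A → Fin d) ℂ) ⊗ₖ ptraceSet A X).submatrix
      (Equiv.piEquivPiSubtypeProd (· ∈ A) _) (Equiv.piEquivPiSubtypeProd (· ∈ A) _)

lemma depolarize_apply (A : Finset V) (X : Matrix (V → Fin d) (V → Fin d) ℂ)
    (x y : V → Fin d) :
    depolarize A X x y = ((d : ℂ) ^ A.card)⁻¹ * if ∀ w ∈ A, x w = y w then
      ∑ f : A → Fin d, X (updateFinset x A f) (updateFinset y A f) else 0 := by
  have hrestrict : A.restrict x = A.restrict y ↔ ∀ w ∈ A, x w = y w := by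
    simp [funext_iff]
  rw [depolarize, Matrix.smul_apply, submatrix_apply, kroneckerMap_apply, smul_eq_mul, one_apply]
  simp only [Equiv.piEquivPiSubtypeProd_apply, ite_mul, one_mul, zero_mul]
  exact congrArg _ (if_congr hrestrict rfl rfl)

@[simp]
lemma depolarize_empty (X : Matrix (V → Fin d) (V → Fin d) ℂ) : depolarize ∅ X = X := by
  ext x y
  simp [depolarize_apply]

lemma depolarize_univ {X : Matrix (V → Fin d) (V → Fin d) ℂ} (hX : X.trace = 0) :
    depolarize Finset.univ X = 0 := by
  ext x y
  have : ∑ f : ↥(Finset.univ : Finset V) → Fin d,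
      X (updateFinset x _ f) (updateFinset y _ f) = 0 := by
    rw [← hX]
    simp only [updateFinset_univ]
    exact Fintype.sum_equiv ((Equiv.subtypeUnivEquiv Finset.mem_univ).arrowCongr (.refl _)) _ _
      fun _ => rfl
  simp [depolarize_apply, this]

lemma depolarize_depolarize {A B : Finset V} (hBA : Disjoint B A)
    (X : Matrix (V → Fin d) (V → Fin d) ℂ) :
    depolarize B (depolarize A X) = depolarize (B ∪ A) X := by
  ext x y
  have hA (g : B → Fin d) : (∀ w ∈ A, updateFinset x B g w = updateFinset y B g w) ↔
      ∀ w ∈ A, x w = y w :=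
    forall₂_congr fun w hw => by simp [updateFinset, Finset.disjoint_right.mp hBA hw]
  simp only [depolarize_apply, hA, Finset.forall_mem_union, Finset.card_union_of_disjoint hBA,
    pow_add, mul_inv]
  by_cases hxy : (∀ w ∈ B, x w = y w) ∧ ∀ w ∈ A, x w = y w
  · simp only [if_pos hxy, if_pos hxy.1, if_pos hxy.2, ← Finset.mul_sum,
      sum_sum_updateFinset₂ hBA X, mul_assoc]
  · rw [if_neg hxy, mul_zero]
    by_cases hB : ∀ w ∈ B, x w = y w
    · simp only [if_neg fun hA => hxy ⟨hB, hA⟩, mul_zero, Finset.sum_const_zero, ite_self]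
    · simp only [if_neg hB, mul_zero]

lemma ptraceSite_depolarize_singleton (v : V) (X : Matrix (V → Fin d) (V → Fin d) ℂ) :
    ptraceSite v (depolarize {v} X) = ptraceSite v X := by
  ext s t
  simp only [ptraceSite, of_apply, depolarize_apply, Finset.mem_singleton, forall_eq,
    insertAt_self, if_true, sum_updateFinset_singleton₂ v X, update_insertAt, Finset.sum_const,
    Finset.card_univ, Fintype.card_fin, Finset.card_singleton, pow_one, nsmul_eq_mul]
  rcases eq_or_ne d 0 with rfl | hd
  · simp
  · rw [← mul_assoc, mul_inv_cancel₀ (Nat.cast_ne_zero.mpr hd), one_mul]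

lemma traceNorm_depolarize_le (A : Finset V) (X : Matrix (V → Fin d) (V → Fin d) ℂ) :
    traceNorm (depolarize A X) ≤ traceNorm (ptraceSet A X) := by
  rw [depolarize, traceNorm_smul, traceNorm_submatrix_equiv, traceNorm_one_kronecker,
    Fintype.card_fun, Fintype.card_coe, Fintype.card_fin, ← mul_assoc]
  refine mul_le_of_le_one_left (traceNorm_nonneg _) ?_
  simpa using inv_mul_le_one (a := (d : ℝ) ^ A.card)

end Sites

def firstSites (n k : ℕ) : Finset (Fin n) := Finset.univ.filter fun i : Fin n => (i : ℕ) < k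

lemma firstSites_zero (n : ℕ) : firstSites n 0 = ∅ := by
  simp [firstSites]

lemma firstSites_self (n : ℕ) : firstSites n n = Finset.univ := by
  simp [firstSites]

lemma firstSites_succ {n : ℕ} (v : Fin n) : firstSites n (v + 1) = {v} ∪ firstSites n v := by
  ext i
  simp [firstSites, le_iff_eq_or_lt, Fin.val_inj]

lemma disjoint_singleton_firstSites {n : ℕ} (v : Fin n) : Disjoint {v} (firstSites n v) := by
  simp [firstSites]

theorem W1norm_le_sum_traceNorm_ptrace_general (n d : ℕ)
    (X : Matrix (Fin n → Fin d) (Fin n → Fin d) ℂ)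
    (htr : Matrix.trace X = 0) :
    W1norm X ≤ ∑ k ∈ Finset.range n,
      traceNorm (ptraceSet (Finset.univ.filter fun i : Fin n => (i : ℕ) < k) X) := by
  set P : ℕ → Matrix (Fin n → Fin d) (Fin n → Fin d) ℂ := fun k => depolarize (firstSites n k) X
  have hP0 : P 0 = X := by simp [P, firstSites_zero]
  have hPn : P n = 0 := by simp [P, firstSites_self, depolarize_univ htr]
  have hpeel (v : Fin n) : ptraceSite v (P v - P (v + 1)) = 0 := by
    simp only [P]
    rw [firstSites_succ, ← depolarize_depolarize (disjoint_singleton_firstSites v), ptraceSite_sub,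
      ptraceSite_depolarize_singleton, sub_self]
  calc W1norm X ≤ 1 / 2 * ∑ v : Fin n, traceNorm (P v - P (v + 1)) := by
        refine W1norm_le_of_eq_sum (fun v : Fin n => P v - P (v + 1)) ?_ hpeel
        rw [Fin.sum_univ_eq_sum_range (fun k => P k - P (k + 1)), Finset.sum_range_sub', hP0, hPn,
          sub_zero]
    _ ≤ ∑ k ∈ Finset.range n, traceNorm (P k) := by
        rw [Fin.sum_univ_eq_sum_range (fun k => traceNorm (P k - P (k + 1)))]
        linarith [sum_traceNorm_sub_succ_le hPn]
    _ ≤ _ := Finset.sum_le_sum fun k _ => traceNorm_depolarize_le _ _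

/-- For an `n`-site system, `‖X‖_{W₁} ≤ Σ_{k=0}^{n-1} ‖Tr_{1…k} X‖₁` for every traceless
self-adjoint `X`, where `Tr_{1…k}` is the partial trace over the first `k` sites. -/
theorem W1norm_le_sum_traceNorm_ptrace (n d : ℕ)
    (X : Matrix (Fin n → Fin d) (Fin n → Fin d) ℂ)
    (hX : X.IsHermitian) (htr : Matrix.trace X = 0) :
    W1norm X ≤ ∑ k ∈ Finset.range n,
      traceNorm (ptraceSet (Finset.univ.filter fun i : Fin n => (i : ℕ) < k) X) :=
  W1norm_le_sum_traceNorm_ptrace_general n d X htr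
end

section
/- Let ω be a full-rank state satisfying the transportation cost inequality ‖ρ-ω‖_{W₁} ≤ √(c·S(ρ‖ω)) for all states ρ, and let O be a self-adjoint operator commuting with ω with Tr[ωO] = 0 and ‖O‖_L ≤ 1 (in the dual-Lipschitz sense ‖ρ-ω‖_{W₁} ≥ |Tr[(ρ-ω)O]|). Then for every r ≥ 0, the probability (under the spectral measure of O in the state ω) that |O| ≥ r is at most 2·exp(-r²/c). -/
open scoped ComplexOrder

/-- Matrix logarithm via the spectral decomposition (junk value `0` off the
Hermitian matrices; on eigenvalue `0` we use `Real.log 0 = 0`, matching the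
convention `0 · log 0 = 0` on the support). -/
noncomputable def Matrix.mlog {m : Type*} [Fintype m] [DecidableEq m]
    (A : Matrix m m ℂ) : Matrix m m ℂ :=
  if hA : A.IsHermitian then
    (hA.eigenvectorUnitary : Matrix m m ℂ) *
      Matrix.diagonal (fun i => (Real.log (hA.eigenvalues i) : ℂ)) *
      (star (hA.eigenvectorUnitary : Matrix m m ℂ))
  else 0

/-- Umegaki's relative entropy `S(ρ‖ω) = Tr[ρ (ln ρ - ln ω)]`. -/
noncomputable def relEnt {m : Type*} [Fintype m] [DecidableEq m] (ρ ω : Matrix m m ℂ) : ℝ :=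
  (Matrix.trace (ρ * (ρ.mlog - ω.mlog))).re

/-- Von Neumann entropy `S(ρ) = -Tr[ρ ln ρ]`. -/
noncomputable def vnEnt {m : Type*} [Fintype m] [DecidableEq m] (ρ : Matrix m m ℂ) : ℝ :=
  -(Matrix.trace (ρ * ρ.mlog)).re

/-- `ℙ_ω(|O| ≥ r)`: the probability of measuring an eigenvalue `λ` of the observable `O`
with `|λ| ≥ r` in the state `ω` (junk value `0` for non-Hermitian `O`). -/
noncomputable def probAbsGE {m : Type*} [Fintype m] [DecidableEq m]
    (ω O : Matrix m m ℂ) (r : ℝ) : ℝ :=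
  if hO : O.IsHermitian then
    ∑ i ∈ Finset.univ.filter (fun i => r ≤ |hO.eigenvalues i|),
      (Matrix.trace (ω * ((hO.eigenvectorUnitary : Matrix m m ℂ) *
        Matrix.single i i 1 * star (hO.eigenvectorUnitary : Matrix m m ℂ)))).re
  else 0

/-!
Since `ω` and `O` commute, they are diagonal in a common orthonormal eigenbasis, `ω = diag a` and
`O = diag l`, and every state diagonal in that basis is a probability vector `q` with
`S(q ‖ a) = ∑ q (log q - log a)`. For each `θ` the tilted state `q ∝ a e^{θ l}` has
`S(q ‖ a) = θ ⟨q, l⟩ - log Z(θ)`, where `Z(θ) = ∑ a e^{θ l} = Tr[ω e^{θ O}]`. The Lipschitz and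
transportation cost inequalities bound `|⟨q, l⟩|` by `√(c S(q ‖ a))`, and AM-GM turns this into
`log Z(θ) ≤ c θ² / 4`. The Chernoff bound at `θ = ± 2 r / c` then gives `e^{-r²/c}` for each tail.
-/

open Matrix Unitary

section ClassicalConcentration

variable {m : Type*} [Fintype m]

theorem mul_le_of_abs_le_sqrt {c D T : ℝ} (hc : 0 < c) (hD : 0 ≤ D)
    (h : |T| ≤ Real.sqrt (c * D)) (θ : ℝ) : θ * T ≤ c * θ ^ 2 / 4 + D := by
  have hs := Real.sq_sqrt (mul_nonneg hc.le hD)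
  have hθT : θ * T ≤ |θ| * Real.sqrt (c * D) := by
    calc θ * T ≤ |θ| * |T| := by rw [← abs_mul]; exact le_abs_self _
      _ ≤ _ := mul_le_mul_of_nonneg_left h (abs_nonneg θ)
  have hAMGM : c * (|θ| * Real.sqrt (c * D)) ≤ c * (c * θ ^ 2 / 4 + D) := by
    have hθ : c ^ 2 * |θ| ^ 2 = c ^ 2 * θ ^ 2 := by rw [sq_abs]
    nlinarith [sq_nonneg (c * |θ| - 2 * Real.sqrt (c * D))]
  exact hθT.trans (le_of_mul_le_mul_left hAMGM hc)

noncomputable def classicalRelEnt (q a : m → ℝ) : ℝ :=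
  ∑ i, q i * (Real.log (q i) - Real.log (a i))

theorem sub_le_mul_log_sub_log {q a : ℝ} (hq : 0 ≤ q) (ha : 0 < a) :
    q - a ≤ q * (Real.log q - Real.log a) := by
  rcases hq.eq_or_lt with rfl | hq
  · simpa using ha.le
  · have := Real.one_sub_inv_le_log_of_pos (div_pos hq ha)
    rw [Real.log_div hq.ne' ha.ne', inv_div] at this
    calc q - a = q * (1 - a / q) := by field_simp
      _ ≤ _ := mul_le_mul_of_nonneg_left this hq.le

theorem classicalRelEnt_nonneg {q a : m → ℝ} (hq : 0 ≤ q) (ha : ∀ i, 0 < a i)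
    (hsum : ∑ i, q i = ∑ i, a i) : 0 ≤ classicalRelEnt q a :=
  calc 0 = ∑ i, (q i - a i) := by rw [Finset.sum_sub_distrib, hsum, sub_self]
    _ ≤ _ := Finset.sum_le_sum fun i _ => sub_le_mul_log_sub_log (hq i) (ha i)

-- `Tr[ω e^{θ O}]` for `ω = diag a`, `O = diag l`
noncomputable def laplaceSum (a l : m → ℝ) (θ : ℝ) : ℝ :=
  ∑ i, a i * Real.exp (θ * l i)

-- the tilted state `ω e^{θ O} / Tr[ω e^{θ O}]`
noncomputable def expTilt (a l : m → ℝ) (θ : ℝ) (i : m) : ℝ :=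
  a i * Real.exp (θ * l i) / laplaceSum a l θ

section Tilt

variable [Nonempty m] {a : m → ℝ} (ha : ∀ i, 0 < a i) (l : m → ℝ) (θ : ℝ)
include ha

theorem laplaceSum_pos : 0 < laplaceSum a l θ :=
  Finset.sum_pos (fun i _ => mul_pos (ha i) (Real.exp_pos _)) Finset.univ_nonempty

theorem expTilt_pos (i : m) : 0 < expTilt a l θ i :=
  div_pos (mul_pos (ha i) (Real.exp_pos _)) (laplaceSum_pos ha l θ)

theorem sum_expTilt : ∑ i, expTilt a l θ i = 1 := by
  unfold expTilt
  rw [← Finset.sum_div]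
  exact div_self (laplaceSum_pos ha l θ).ne'

theorem classicalRelEnt_expTilt :
    classicalRelEnt (expTilt a l θ) a =
      θ * ∑ i, expTilt a l θ i * l i - Real.log (laplaceSum a l θ) := by
  have hlog (i : m) : Real.log (expTilt a l θ i) - Real.log (a i) =
      θ * l i - Real.log (laplaceSum a l θ) := by
    rw [expTilt, Real.log_div (mul_pos (ha i) (Real.exp_pos _)).ne' (laplaceSum_pos ha l θ).ne',
      Real.log_mul (ha i).ne' (Real.exp_pos _).ne', Real.log_exp]
    ring
  simp only [classicalRelEnt, hlog, mul_sub, Finset.sum_sub_distrib, ← Finset.sum_mul,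
    sum_expTilt ha, one_mul, Finset.mul_sum]
  congr 1
  exact Finset.sum_congr rfl fun i _ => by ring

end Tilt

theorem log_laplaceSum_le [Nonempty m] {a l : m → ℝ} {c : ℝ} (ha : ∀ i, 0 < a i)
    (ha1 : ∑ i, a i = 1) (hc : 0 < c)
    (hTC : ∀ q : m → ℝ, 0 ≤ q → ∑ i, q i = 1 →
      |∑ i, q i * l i| ≤ Real.sqrt (c * classicalRelEnt q a)) (θ : ℝ) :
    Real.log (laplaceSum a l θ) ≤ c * θ ^ 2 / 4 := by
  have hq : 0 ≤ expTilt a l θ := fun i => (expTilt_pos ha l θ i).le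
  have hq1 := sum_expTilt ha l θ
  have hD := classicalRelEnt_nonneg hq ha (hq1.trans ha1.symm)
  have := mul_le_of_abs_le_sqrt hc hD (hTC _ hq hq1) θ
  rw [classicalRelEnt_expTilt ha] at this
  linarith

theorem sum_filter_le_exp_mul_laplaceSum {t : m → ℝ} (ht : 0 ≤ t) (l : m → ℝ) {θ : ℝ}
    (hθ : 0 ≤ θ) (r : ℝ) :
    ∑ i ∈ Finset.univ.filter (fun i => r ≤ l i), t i ≤ Real.exp (-(θ * r)) * laplaceSum t l θ :=
  calc ∑ i ∈ Finset.univ.filter (fun i => r ≤ l i), t i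
      ≤ ∑ i ∈ Finset.univ.filter (fun i => r ≤ l i), t i * Real.exp (θ * l i - θ * r) := by
        refine Finset.sum_le_sum fun i hi => le_mul_of_one_le_right (ht i) (Real.one_le_exp ?_)
        nlinarith [(Finset.mem_filter.mp hi).2]
    _ ≤ ∑ i, t i * Real.exp (θ * l i - θ * r) :=
        Finset.sum_le_sum_of_subset_of_nonneg (Finset.filter_subset _ _)
          fun i _ _ => mul_nonneg (ht i) (Real.exp_pos _).le
    _ = _ := by
        simp only [laplaceSum, Finset.mul_sum, sub_eq_add_neg, Real.exp_add]
        exact Finset.sum_congr rfl fun i _ => by ring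

theorem sum_filter_le_exp_of_laplaceSum_le {t l : m → ℝ} {c r : ℝ} (ht : 0 ≤ t) (hc : 0 < c)
    (hr : 0 ≤ r) (h : ∀ θ, laplaceSum t l θ ≤ Real.exp (c * θ ^ 2 / 4)) :
    ∑ i ∈ Finset.univ.filter (fun i => r ≤ l i), t i ≤ Real.exp (-(r ^ 2) / c) := by
  -- Chernoff bound at the optimal `θ = 2r/c`
  have hθ : 0 ≤ 2 * r / c := by positivity
  calc _ ≤ Real.exp (-(2 * r / c * r)) * laplaceSum t l (2 * r / c) :=
        sum_filter_le_exp_mul_laplaceSum ht l hθ r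
    _ ≤ Real.exp (-(2 * r / c * r)) * Real.exp (c * (2 * r / c) ^ 2 / 4) := by gcongr; exact h _
    _ = Real.exp (-(r ^ 2) / c) := by
        rw [← Real.exp_add]
        congr 1
        field_simp
        ring

theorem sum_filter_abs_le_two_exp_of_laplaceSum_le {t l : m → ℝ} {c r : ℝ} (ht : 0 ≤ t)
    (hc : 0 < c) (hr : 0 ≤ r) (h : ∀ θ, laplaceSum t l θ ≤ Real.exp (c * θ ^ 2 / 4)) :
    ∑ i ∈ Finset.univ.filter (fun i => r ≤ |l i|), t i ≤ 2 * Real.exp (-(r ^ 2) / c) := by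
  have hneg (θ : ℝ) : laplaceSum t (-l) θ ≤ Real.exp (c * θ ^ 2 / 4) := by
    simpa [laplaceSum, neg_mul_comm] using h (-θ)
  calc _ ≤ ∑ i ∈ Finset.univ.filter (fun i => r ≤ l i), t i +
        ∑ i ∈ Finset.univ.filter (fun i => r ≤ (-l) i), t i := by
        simp only [Finset.sum_filter, ← Finset.sum_add_distrib]
        refine Finset.sum_le_sum fun i _ => ?_
        have hti : 0 ≤ t i := ht i
        rw [Pi.neg_apply]
        split_ifs <;> grind [le_abs']
    _ ≤ _ := by
        rw [two_mul]
        exact add_le_add (sum_filter_le_exp_of_laplaceSum_le ht hc hr h)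
          (sum_filter_le_exp_of_laplaceSum_le ht hc hr hneg)

theorem sum_filter_abs_le_two_exp_of_transport {a l : m → ℝ} {c : ℝ} (ha : ∀ i, 0 < a i)
    (ha1 : ∑ i, a i = 1) (hc : 0 < c)
    (hTC : ∀ q : m → ℝ, 0 ≤ q → ∑ i, q i = 1 →
      |∑ i, q i * l i| ≤ Real.sqrt (c * classicalRelEnt q a)) {r : ℝ} (hr : 0 ≤ r) :
    ∑ i ∈ Finset.univ.filter (fun i => r ≤ |l i|), a i ≤ 2 * Real.exp (-(r ^ 2) / c) := by
  have : Nonempty m := by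
    by_contra h
    simp [not_nonempty_iff.mp h] at ha1
  refine sum_filter_abs_le_two_exp_of_laplaceSum_le (fun i => (ha i).le) hc hr fun θ => ?_
  exact (Real.log_le_iff_le_exp (laplaceSum_pos ha l θ)).mp (log_laplaceSum_le ha ha1 hc hTC θ)

end ClassicalConcentration

open Module Module.End in
theorem LinearMap.IsSymmetric.exists_orthonormalBasis_apply_eq_smul_of_commute
    {𝕜 E ι : Type*} [RCLike 𝕜] [NormedAddCommGroup E] [InnerProductSpace 𝕜 E]
    [FiniteDimensional 𝕜 E] [Fintype ι] (hn : finrank 𝕜 E = Fintype.card ι)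
    {A B : E →ₗ[𝕜] E} (hA : A.IsSymmetric) (hB : B.IsSymmetric) (hAB : Commute A B) :
    ∃ (b : OrthonormalBasis ι 𝕜 E) (α β : ι → ℝ),
      ∀ i, A (b i) = (α i : 𝕜) • b i ∧ B (b i) = (β i : 𝕜) • b i := by
  classical
  set V : 𝕜 × 𝕜 → Submodule 𝕜 E := fun μ => eigenspace A μ.2 ⊓ eigenspace B μ.1
  have hV : DirectSum.IsInternal V := hA.directSum_isInternal_of_commute hB hAB
  let _ : Fintype {μ // V μ ≠ ⊥} := hV.submodule_iSupIndep.fintypeNeBotOfFiniteDimensional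
  have hV' : DirectSum.IsInternal fun μ : {μ // V μ ≠ ⊥} => V μ :=
    DirectSum.isInternal_ne_bot_iff.mpr hV
  have horth := (hA.orthogonalFamily_eigenspace_inf_eigenspace hB).comp
    (Subtype.val_injective (p := fun μ => V μ ≠ ⊥))
  let e := (Fintype.equivFin ι).symm
  let b := (hV'.subordinateOrthonormalBasis hn horth).reindex e
  have hb (i : ι) : ∃ μ : 𝕜 × 𝕜, b i ∈ V μ :=
    ⟨_, by simpa [b] using hV'.subordinateOrthonormalBasis_subordinate hn (e.symm i) horth⟩
  have hreal {T : E →ₗ[𝕜] E} (hT : T.IsSymmetric) {μ : 𝕜} (i : ι) (hi : b i ∈ eigenspace T μ) :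
      T (b i) = ((RCLike.re μ : ℝ) : 𝕜) • b i := by
    have hμ : HasEigenvalue T μ := hasEigenvalue_of_hasEigenvector ⟨hi, b.toBasis.ne_zero i⟩
    rw [RCLike.conj_eq_iff_re.mp (hT.conj_eigenvalue_eq_self hμ), mem_eigenspace_iff.mp hi]
  choose μ hμ using hb
  exact ⟨b, fun i => RCLike.re (μ i).2, fun i => RCLike.re (μ i).1,
    fun i => ⟨hreal hA i (hμ i).1, hreal hB i (hμ i).2⟩⟩

section ConjDiagonal

variable {m : Type*} [Fintype m] [DecidableEq m]

noncomputable def conjDiagonal (V : unitaryGroup m ℂ) (d : m → ℝ) : Matrix m m ℂ :=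
  conjStarAlgAut ℂ _ V (diagonal fun i => (d i : ℂ))

variable (V : unitaryGroup m ℂ)

theorem conjDiagonal_eq (d : m → ℝ) :
    conjDiagonal V d = V * diagonal (fun i => (d i : ℂ)) * star (V : Matrix m m ℂ) :=
  rfl

theorem conjDiagonal_mul (d e : m → ℝ) :
    conjDiagonal V d * conjDiagonal V e = conjDiagonal V (d * e) := by
  simp only [conjDiagonal, ← map_mul, diagonal_mul_diagonal, Pi.mul_apply, Complex.ofReal_mul]

theorem conjDiagonal_sub (d e : m → ℝ) :
    conjDiagonal V d - conjDiagonal V e = conjDiagonal V (d - e) := by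
  simp only [conjDiagonal, ← map_sub, diagonal_sub, Pi.sub_apply, Complex.ofReal_sub]

theorem trace_conjDiagonal (d : m → ℝ) : trace (conjDiagonal V d) = ∑ i, (d i : ℂ) := by
  rw [conjDiagonal, conjStarAlgAut_apply, trace_mul_cycle, coe_star_mul_self, one_mul,
    trace_diagonal]

theorem isHermitian_conjDiagonal (d : m → ℝ) : (conjDiagonal V d).IsHermitian := by
  have : IsSelfAdjoint (diagonal fun i => (d i : ℂ)) :=
    isHermitian_diagonal_of_self_adjoint _ (funext fun i => Complex.conj_ofReal (d i))
  exact this.map (conjStarAlgAut ℂ _ V)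

theorem posSemidef_conjDiagonal {d : m → ℝ} (hd : 0 ≤ d) : (conjDiagonal V d).PosSemidef := by
  rw [conjDiagonal, conjStarAlgAut_apply,
    IsUnit.posSemidef_star_right_conjugate_iff isUnit_coe, posSemidef_diagonal_iff]
  exact fun i => Complex.zero_le_real.mpr (hd i)

theorem pos_of_posDef_conjDiagonal {d : m → ℝ} (h : (conjDiagonal V d).PosDef) (i : m) :
    0 < d i := by
  rw [conjDiagonal, conjStarAlgAut_apply,
    IsUnit.posDef_star_right_conjugate_iff isUnit_coe, posDef_diagonal_iff] at h
  exact Complex.zero_lt_real.mp (h i)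

theorem Matrix.IsHermitian.eq_conjDiagonal {A : Matrix m m ℂ} (hA : A.IsHermitian) :
    A = conjDiagonal hA.eigenvectorUnitary hA.eigenvalues :=
  hA.spectral_theorem

theorem mul_diagonal_comp_eq_of_mul_diagonal_eq {S : Matrix m m ℂ} {d e : m → ℝ}
    (h : S * diagonal (fun i => (d i : ℂ)) = diagonal (fun i => (e i : ℂ)) * S) (f : ℝ → ℝ) :
    S * diagonal (fun i => (f (d i) : ℂ)) = diagonal (fun i => (f (e i) : ℂ)) * S := by
  ext i j
  have hij := congrFun (congrFun h i) j
  simp only [mul_diagonal, diagonal_mul] at hij ⊢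
  by_cases hS : S i j = 0
  · simp [hS]
  · have : d j = e i := by exact_mod_cast mul_left_cancel₀ hS (hij.trans (mul_comm _ _))
    rw [this, mul_comm]

theorem conjDiagonal_comp_eq_of_eq {V W : unitaryGroup m ℂ} {d e : m → ℝ}
    (h : conjDiagonal V d = conjDiagonal W e) (f : ℝ → ℝ) :
    conjDiagonal V (f ∘ d) = conjDiagonal W (f ∘ e) := by
  obtain ⟨V, hV⟩ := V
  obtain ⟨W, hW⟩ := W
  have hV₁ : star V * V = 1 := mem_unitaryGroup_iff'.mp hV
  have hV₂ : V * star V = 1 := mem_unitaryGroup_iff.mp hV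
  have hW₁ : star W * W = 1 := mem_unitaryGroup_iff'.mp hW
  have hW₂ : W * star W = 1 := mem_unitaryGroup_iff.mp hW
  simp only [conjDiagonal, conjStarAlgAut_apply] at h ⊢
  have hS : (star W * V) * diagonal (fun i => (d i : ℂ))
      = diagonal (fun i => (e i : ℂ)) * (star W * V) := calc
    _ = star W * (V * diagonal (fun i => (d i : ℂ)) * star V) * V := by
      simp only [Matrix.mul_assoc, hV₁, Matrix.mul_one]
    _ = star W * W * diagonal (fun i => (e i : ℂ)) * (star W * V) := by
      simp only [h, Matrix.mul_assoc]
    _ = _ := by rw [hW₁, Matrix.one_mul]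
  calc V * diagonal (fun i => (f (d i) : ℂ)) * star V
      = W * ((star W * V) * diagonal (fun i => (f (d i) : ℂ))) * star V := by
        simp only [← Matrix.mul_assoc, hW₂, Matrix.one_mul]
    _ = W * diagonal (fun i => (f (e i) : ℂ)) * star W * (V * star V) := by
        rw [mul_diagonal_comp_eq_of_mul_diagonal_eq hS f]
        simp only [Matrix.mul_assoc]
    _ = _ := by rw [hV₂, Matrix.mul_one]; rfl

theorem mlog_conjDiagonal (d : m → ℝ) :
    (conjDiagonal V d).mlog = conjDiagonal V (Real.log ∘ d) := by
  have hA := isHermitian_conjDiagonal V d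
  rw [Matrix.mlog, dif_pos hA]
  exact conjDiagonal_comp_eq_of_eq hA.eq_conjDiagonal.symm Real.log

theorem probAbsGE_conjDiagonal (a l : m → ℝ) (r : ℝ) :
    probAbsGE (conjDiagonal V a) (conjDiagonal V l) r =
      ∑ i ∈ Finset.univ.filter (fun i => r ≤ |l i|), a i := by
  -- the spectral projection of `O` onto `{|λ| ≥ r}` is `f O`, computable in any eigenbasis
  set f : ℝ → ℝ := fun x => if r ≤ |x| then 1 else 0
  have hO := isHermitian_conjDiagonal V l
  set U := hO.eigenvectorUnitary
  have hproj : ∑ i ∈ Finset.univ.filter (fun i => r ≤ |hO.eigenvalues i|),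
      (U : Matrix m m ℂ) * single i i 1 * star (U : Matrix m m ℂ) =
        conjDiagonal U (f ∘ hO.eigenvalues) := by
    rw [← Finset.sum_mul, ← Finset.mul_sum, Finset.sum_filter, conjDiagonal_eq U,
      ← sum_single_eq_diagonal]
    congr 3 with i
    split_ifs <;> simp [f, *]
  rw [probAbsGE, dif_pos hO]
  calc _ = (trace (conjDiagonal V a * ∑ i ∈ Finset.univ.filter (fun i => r ≤ |hO.eigenvalues i|),
        (U : Matrix m m ℂ) * single i i 1 * star (U : Matrix m m ℂ))).re := by
        simp only [U, Finset.mul_sum, trace_sum, Complex.re_sum]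
    _ = (trace (conjDiagonal V (a * f ∘ l))).re := by
        rw [hproj, conjDiagonal_comp_eq_of_eq hO.eq_conjDiagonal.symm, conjDiagonal_mul]
    _ = _ := by
        simp [trace_conjDiagonal, Complex.re_sum, f, Finset.sum_filter]

theorem eq_conjDiagonal_of_mulVec_eq {A : Matrix m m ℂ}
    (b : OrthonormalBasis m ℂ (EuclideanSpace ℂ m)) {a : m → ℝ}
    (h : ∀ j, A *ᵥ b j = (a j : ℂ) • ⇑(b j)) :
    A = conjDiagonal
      ⟨_, (EuclideanSpace.basisFun m ℂ).toMatrix_orthonormalBasis_mem_unitary b⟩ a := by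
  set V : unitaryGroup m ℂ :=
    ⟨_, (EuclideanSpace.basisFun m ℂ).toMatrix_orthonormalBasis_mem_unitary b⟩
  have hV : A * V = V * diagonal (fun i => (a i : ℂ)) := by
    have hVij (i j : m) : (V : Matrix m m ℂ) i j = b j i := rfl
    ext i j
    rw [mul_diagonal]
    simpa [mul_apply, mulVec, dotProduct, hVij, mul_comm] using congrFun (h j) i
  rw [conjDiagonal_eq, ← hV, Matrix.mul_assoc, mem_unitaryGroup_iff.mp V.2, Matrix.mul_one]

theorem Matrix.IsHermitian.exists_conjDiagonal_eq_of_commute {A B : Matrix m m ℂ}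
    (hA : A.IsHermitian) (hB : B.IsHermitian) (hAB : Commute A B) :
    ∃ (V : unitaryGroup m ℂ) (a b : m → ℝ), A = conjDiagonal V a ∧ B = conjDiagonal V b := by
  obtain ⟨v, a, b, hv⟩ :=
    (isSymmetric_toEuclideanLin_iff.mpr hA).exists_orthonormalBasis_apply_eq_smul_of_commute
      finrank_euclideanSpace (isSymmetric_toEuclideanLin_iff.mpr hB) (hAB.map (toLpLinAlgEquiv 2))
  refine ⟨_, a, b, eq_conjDiagonal_of_mulVec_eq v fun j => ?_,
    eq_conjDiagonal_of_mulVec_eq v fun j => ?_⟩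
  · simpa using congrArg WithLp.ofLp (hv j).1
  · simpa using congrArg WithLp.ofLp (hv j).2

theorem isState_conjDiagonal {q : m → ℝ} (hq : 0 ≤ q) (hq1 : ∑ i, q i = 1) :
    IsState (conjDiagonal V q) :=
  ⟨posSemidef_conjDiagonal V hq, by rw [trace_conjDiagonal]; exact_mod_cast hq1⟩

theorem re_trace_conjDiagonal_mul (d e : m → ℝ) :
    (trace (conjDiagonal V d * conjDiagonal V e)).re = ∑ i, d i * e i := by
  simp [conjDiagonal_mul, trace_conjDiagonal, Complex.re_sum]

theorem relEnt_conjDiagonal (q a : m → ℝ) :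
    relEnt (conjDiagonal V q) (conjDiagonal V a) = classicalRelEnt q a := by
  rw [relEnt, mlog_conjDiagonal, mlog_conjDiagonal, conjDiagonal_sub, re_trace_conjDiagonal_mul]
  rfl

end ConjDiagonal

/-- Gaussian concentration for observables commuting with `ω`: if the full-rank state `ω`
satisfies `TC(c)` and `O` is self-adjoint, commutes with `ω`, has `Tr[ωO] = 0` and
Lipschitz constant at most `1` in the dual sense, then
`ℙ_ω(|O| ≥ r) ≤ 2·exp(-r²/c)` for all `r ≥ 0`. -/
theorem gaussian_concentration_commuting {m : Type*} [Fintype m] [DecidableEq m]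
    (ω : Matrix m m ℂ) (hω : ω.PosDef) (hωtr : Matrix.trace ω = 1)
    (c : ℝ) (hc : 0 < c)
    (w1 : Matrix m m ℂ → ℝ)
    (hTC : ∀ ρ, IsState ρ → w1 (ρ - ω) ≤ Real.sqrt (c * relEnt ρ ω))
    (O : Matrix m m ℂ) (hO : O.IsHermitian) (hcomm : O * ω = ω * O)
    (hO0 : Matrix.trace (ω * O) = 0)
    (hLip : ∀ ρ, IsState ρ → |(Matrix.trace ((ρ - ω) * O)).re| ≤ w1 (ρ - ω)) :
    ∀ r : ℝ, 0 ≤ r → probAbsGE ω O r ≤ 2 * Real.exp (-(r ^ 2) / c) := by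
  obtain ⟨V, a, l, rfl, rfl⟩ := hω.1.exists_conjDiagonal_eq_of_commute hO hcomm.symm
  have ha1 : ∑ i, a i = 1 := by exact_mod_cast (trace_conjDiagonal V a).symm.trans hωtr
  intro r hr
  rw [probAbsGE_conjDiagonal]
  refine sum_filter_abs_le_two_exp_of_transport (pos_of_posDef_conjDiagonal V hω) ha1 hc
    (fun q hq hq1 => ?_) hr
  have hρ := isState_conjDiagonal V hq hq1
  calc |∑ i, q i * l i|
      = |(trace ((conjDiagonal V q - conjDiagonal V a) * conjDiagonal V l)).re| := by
        rw [Matrix.sub_mul, trace_sub, hO0, sub_zero, re_trace_conjDiagonal_mul]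
    _ ≤ w1 (conjDiagonal V q - conjDiagonal V a) := hLip _ hρ
    _ ≤ _ := hTC _ hρ
    _ = _ := by rw [relEnt_conjDiagonal]
end

section
/- If a probability measure μ on a finite product space satisfies the transportation cost inequality W₁(ν,μ) ≤ √(c·S(ν‖μ)) for all ν ≪ μ, then for every function f with Lipschitz constant at most 1 (with respect to the metric defining W₁), ℙ_μ(|f(X) - E_μ[f(X)]| > t) ≤ 2·e^{-t²/c} for all t ≥ 0. -/
/-!
Tilting `μ` by `e^{θ (f - E_μ f)}` gives a probability `ν ≪ μ` with
`S(ν‖μ) = θ (E_ν f - E_μ f) - log E_μ e^{θ (f - E_μ f)}` (the equality case of the Gibbs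
variational principle). The transportation inequality bounds `θ (E_ν f - E_μ f)` by `|θ| √(c S)`,
and `|θ| √(c S) - S ≤ c θ² / 4`, so the moment generating function of `f - E_μ f` is at most
`e^{c θ² / 4}`. Chernoff's bound with `θ = ± 2t / c` then gives the two tails.
-/

open Finset Real

section WeightedSums

variable {ι : Type*} [Fintype ι]

noncomputable def relEntropy (ν μ : ι → ℝ) : ℝ := ∑ a, ν a * log (ν a / μ a)

noncomputable def gibbsTilt (μ g : ι → ℝ) (a : ι) : ℝ :=
  μ a * exp (g a) / ∑ b, μ b * exp (g b)

theorem sub_le_mul_log_div {x y : ℝ} (hx : 0 ≤ x) (hy : 0 ≤ y) (hxy : y = 0 → x = 0) :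
    x - y ≤ x * log (x / y) := by
  rcases hx.eq_or_lt with rfl | hx
  · simpa using hy
  rcases hy.eq_or_lt with rfl | hy
  · exact absurd (hxy rfl) hx.ne'
  have h := mul_le_mul_of_nonneg_left (one_sub_inv_le_log_of_pos (div_pos hx hy)) hx.le
  rwa [inv_div, mul_sub, mul_one, mul_div_cancel₀ _ hx.ne'] at h

theorem relEntropy_nonneg {ν μ : ι → ℝ} (hν0 : ∀ a, 0 ≤ ν a) (hμ0 : ∀ a, 0 ≤ μ a)
    (hνμ : ∀ a, μ a = 0 → ν a = 0) (hsum : ∑ a, ν a = ∑ a, μ a) : 0 ≤ relEntropy ν μ := by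
  have h := sum_le_sum fun a (_ : a ∈ univ) => sub_le_mul_log_div (hν0 a) (hμ0 a) (hνμ a)
  rwa [sum_sub_distrib, hsum, sub_self] at h

theorem sum_mul_exp_pos {μ : ι → ℝ} (hμ0 : ∀ a, 0 ≤ μ a) (hμ : 0 < ∑ a, μ a) (g : ι → ℝ) :
    0 < ∑ a, μ a * exp (g a) := by
  obtain ⟨a, -, ha⟩ := exists_lt_of_sum_lt (show ∑ _a : ι, (0 : ℝ) < ∑ a, μ a by simpa using hμ)
  exact sum_pos' (fun b _ => mul_nonneg (hμ0 b) (exp_pos _).le)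
    ⟨a, mem_univ a, mul_pos ha (exp_pos _)⟩

theorem gibbsTilt_nonneg {μ : ι → ℝ} (hμ0 : ∀ a, 0 ≤ μ a) (g : ι → ℝ) (a : ι) :
    0 ≤ gibbsTilt μ g a :=
  div_nonneg (mul_nonneg (hμ0 a) (exp_pos _).le)
    (sum_nonneg fun b _ => mul_nonneg (hμ0 b) (exp_pos _).le)

theorem gibbsTilt_eq_zero {μ : ι → ℝ} (g : ι → ℝ) {a : ι} (ha : μ a = 0) :
    gibbsTilt μ g a = 0 := by
  simp [gibbsTilt, ha]

theorem sum_gibbsTilt {μ : ι → ℝ} (hμ0 : ∀ a, 0 ≤ μ a) (hμ : 0 < ∑ a, μ a) (g : ι → ℝ) :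
    ∑ a, gibbsTilt μ g a = 1 := by
  simp only [gibbsTilt, ← sum_div]
  exact div_self (sum_mul_exp_pos hμ0 hμ g).ne'

theorem relEntropy_gibbsTilt {μ : ι → ℝ} (hμ0 : ∀ a, 0 ≤ μ a) (hμ : 0 < ∑ a, μ a)
    (g : ι → ℝ) :
    relEntropy (gibbsTilt μ g) μ =
      ∑ a, gibbsTilt μ g a * g a - log (∑ a, μ a * exp (g a)) := by
  have hZ := sum_mul_exp_pos hμ0 hμ g
  have hterm : ∀ a, gibbsTilt μ g a * log (gibbsTilt μ g a / μ a) =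
      gibbsTilt μ g a * g a - gibbsTilt μ g a * log (∑ b, μ b * exp (g b)) := by
    intro a
    rcases (hμ0 a).eq_or_lt with ha | ha
    · simp [gibbsTilt_eq_zero g ha.symm]
    have hratio : gibbsTilt μ g a / μ a = exp (g a) / ∑ b, μ b * exp (g b) := by
      rw [gibbsTilt, div_right_comm, mul_div_cancel_left₀ _ ha.ne']
    rw [hratio, log_div (exp_ne_zero _) hZ.ne', log_exp, mul_sub]
  rw [relEntropy, sum_congr rfl fun a _ => hterm a, sum_sub_distrib, ← sum_mul,
    sum_gibbsTilt hμ0 hμ g, one_mul]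

theorem mul_sqrt_mul_le (θ : ℝ) {c S : ℝ} (hc : 0 ≤ c) (hS : 0 ≤ S) :
    θ * √(c * S) ≤ c * θ ^ 2 / 4 + S := by
  rw [sqrt_mul hc]
  nlinarith [sq_nonneg (θ * √c / 2 - √S), sq_sqrt hc, sq_sqrt hS]

theorem sum_mul_exp_le_of_transportation_cost {μ f : ι → ℝ} {c : ℝ} (hμ0 : ∀ a, 0 ≤ μ a)
    (hμ1 : ∑ a, μ a = 1) (hc : 0 ≤ c)
    (hTC : ∀ ν : ι → ℝ, (∀ a, 0 ≤ ν a) → ∑ a, ν a = 1 → (∀ a, μ a = 0 → ν a = 0) →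
      |∑ a, ν a * f a - ∑ a, μ a * f a| ≤ √(c * relEntropy ν μ))
    (θ : ℝ) :
    ∑ a, μ a * exp (θ * (f a - ∑ b, μ b * f b)) ≤ exp (c * θ ^ 2 / 4) := by
  set m := ∑ b, μ b * f b
  set g := fun a => θ * (f a - m)
  set ν := gibbsTilt μ g
  have hμ : 0 < ∑ a, μ a := hμ1 ▸ one_pos
  have hν0 : ∀ a, 0 ≤ ν a := gibbsTilt_nonneg hμ0 g
  have hν1 : ∑ a, ν a = 1 := sum_gibbsTilt hμ0 hμ g
  have hνμ : ∀ a, μ a = 0 → ν a = 0 := fun a => gibbsTilt_eq_zero g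
  have hS : 0 ≤ relEntropy ν μ := relEntropy_nonneg hν0 hμ0 hνμ (hν1.trans hμ1.symm)
  have hmean : ∑ a, ν a * g a = θ * (∑ a, ν a * f a - m) := by
    simp only [g, mul_sub, mul_left_comm _ θ, sum_sub_distrib, ← mul_sum, ← sum_mul, hν1,
      one_mul]
  have hlog : log (∑ a, μ a * exp (g a)) ≤ c * θ ^ 2 / 4 :=
    calc log (∑ a, μ a * exp (g a))
        = θ * (∑ a, ν a * f a - m) - relEntropy ν μ := by
          rw [relEntropy_gibbsTilt hμ0 hμ g, hmean]; ring
      _ ≤ |θ| * √(c * relEntropy ν μ) - relEntropy ν μ := by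
          refine sub_le_sub_right ((le_abs_self _).trans ((abs_mul _ _).trans_le ?_)) _
          exact mul_le_mul_of_nonneg_left (hTC ν hν0 hν1 hνμ) (abs_nonneg θ)
      _ ≤ c * |θ| ^ 2 / 4 := by linarith [mul_sqrt_mul_le |θ| hc hS]
      _ = c * θ ^ 2 / 4 := by rw [sq_abs]
  exact (log_le_iff_le_exp (sum_mul_exp_pos hμ0 hμ g)).1 hlog

theorem exp_mul_le_exp_add_exp_neg {θ t x : ℝ} (hθ : 0 ≤ θ) (ht : t ≤ |x|) :
    exp (θ * t) ≤ exp (θ * x) + exp (-θ * x) := by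
  rcases le_abs'.1 ht with hx | hx
  · have : exp (θ * t) ≤ exp (-θ * x) := exp_le_exp.2 (by nlinarith)
    linarith [exp_pos (θ * x)]
  · have : exp (θ * t) ≤ exp (θ * x) := exp_le_exp.2 (by nlinarith)
    linarith [exp_pos (-θ * x)]

theorem sum_filter_lt_abs_le_div_exp {μ g : ι → ℝ} (hμ0 : ∀ a, 0 ≤ μ a) {θ : ℝ}
    (hθ : 0 ≤ θ) (t : ℝ) :
    ∑ a ∈ univ.filter (fun a => t < |g a|), μ a ≤
      (∑ a, μ a * exp (θ * g a) + ∑ a, μ a * exp (-θ * g a)) / exp (θ * t) :=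
  calc ∑ a ∈ univ.filter (fun a => t < |g a|), μ a
      ≤ ∑ a ∈ univ.filter (fun a => t < |g a|),
          μ a * ((exp (θ * g a) + exp (-θ * g a)) / exp (θ * t)) :=
        sum_le_sum fun a ha => le_mul_of_one_le_right (hμ0 a) <|
          (one_le_div (exp_pos _)).2 (exp_mul_le_exp_add_exp_neg hθ (mem_filter.1 ha).2.le)
    _ ≤ ∑ a, μ a * ((exp (θ * g a) + exp (-θ * g a)) / exp (θ * t)) :=
        sum_le_sum_of_subset_of_nonneg (filter_subset _ _) fun a _ _ =>
          mul_nonneg (hμ0 a) (by positivity)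
    _ = (∑ a, μ a * exp (θ * g a) + ∑ a, μ a * exp (-θ * g a)) / exp (θ * t) := by
        rw [← sum_add_distrib, sum_div]
        exact sum_congr rfl fun a _ => by ring

theorem sum_filter_lt_abs_le_two_mul_exp {μ g : ι → ℝ} {c : ℝ} (hμ0 : ∀ a, 0 ≤ μ a)
    (hc : 0 < c) (hmgf : ∀ θ, ∑ a, μ a * exp (θ * g a) ≤ exp (c * θ ^ 2 / 4))
    {t : ℝ} (ht : 0 ≤ t) :
    ∑ a ∈ univ.filter (fun a => t < |g a|), μ a ≤ 2 * exp (-(t ^ 2) / c) := by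
  set θ := 2 * t / c with hθ
  calc ∑ a ∈ univ.filter (fun a => t < |g a|), μ a
      ≤ (∑ a, μ a * exp (θ * g a) + ∑ a, μ a * exp (-θ * g a)) / exp (θ * t) :=
        sum_filter_lt_abs_le_div_exp hμ0 (by positivity) t
    _ ≤ (exp (c * θ ^ 2 / 4) + exp (c * (-θ) ^ 2 / 4)) / exp (θ * t) := by
        gcongr <;> apply hmgf
    _ = 2 * exp (-(t ^ 2) / c) := by
        rw [neg_sq, ← two_mul, mul_div_assoc, ← exp_sub]
        congr 2
        rw [hθ]
        field_simp
        ring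

end WeightedSums

/-- Bobkov–Götze direction on a finite metric probability space: if `μ` satisfies the
transportation cost inequality `W₁(ν,μ) ≤ √(c·S(ν‖μ))` for all `ν ≪ μ` (expressed via
Kantorovich–Rubinstein duality: `|E_ν f - E_μ f| ≤ √(c·S(ν‖μ))` for all `1`-Lipschitz `f`),
then every `1`-Lipschitz `f` satisfies the sub-Gaussian tail bound
`ℙ_μ(|f - E_μ f| > t) ≤ 2·e^{-t²/c}`. -/
theorem subgaussian_tail_of_transportation_cost {Ω : Type*} [Fintype Ω] [MetricSpace Ω]
    (μ : Ω → ℝ) (hμ0 : ∀ a, 0 ≤ μ a) (hμ1 : ∑ a, μ a = 1)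
    (c : ℝ) (hc : 0 < c)
    (hTC : ∀ ν : Ω → ℝ, (∀ a, 0 ≤ ν a) → ∑ a, ν a = 1 → (∀ a, μ a = 0 → ν a = 0) →
      ∀ f : Ω → ℝ, LipschitzWith 1 f →
        |∑ a, ν a * f a - ∑ a, μ a * f a| ≤
          Real.sqrt (c * ∑ a, ν a * Real.log (ν a / μ a)))
    (f : Ω → ℝ) (hf : LipschitzWith 1 f) :
    ∀ t : ℝ, 0 ≤ t →
      ∑ a ∈ Finset.univ.filter (fun a => t < |f a - ∑ b, μ b * f b|), μ a ≤
        2 * Real.exp (-(t ^ 2) / c) := by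
  intro t ht
  refine sum_filter_lt_abs_le_two_mul_exp (g := fun a => f a - ∑ b, μ b * f b) hμ0 hc ?_ ht
  exact sum_mul_exp_le_of_transportation_cost hμ0 hμ1 hc.le
    (fun ν hν0 hν1 hνμ => hTC ν hν0 hν1 hνμ f hf)
end
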